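/- arXiv:1912.10259 — 11 statements merged into one kernel-verified Lean document; each statement's English description precedes it below -/
import Mathlib

section
/- Let r ∈ ℚ and n ∈ ℕ. Then (Σ_{j=0}^{n} Σ_{k=0}^{2n} ((−r)_k / k!) · C(k,j) · C(3n−k, 2n−k) · C(2n−k, n−j)) · (1−r)_n · (n!)² = 27^n · ((1−r)/3)_n · ((2−r)/3)_n · ((3−r)/3)_n. (This expresses, in coefficient form, that the diagonal of the algebraic function (1−x−y)^r/(1−x−y−z) is the hypergeometric series ₃F₂([(1−r)/3, (2−r)/3, (3−r)/3], [1−r, 1], 27x).) -/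
open Finset

open Polynomial in
private lemma poch_add_eval (x y : ℚ) : ∀ m : ℕ, (ascPochhammer ℚ m).eval (x + y) =
    ∑ k ∈ range (m+1), (m.choose k : ℚ) * (ascPochhammer ℚ k).eval x *
      (ascPochhammer ℚ (m-k)).eval y
  | 0 => by simp
  | m+1 => by
    rw [ascPochhammer_succ_eval, poch_add_eval x y m, Finset.sum_mul]
    have key : ∀ k ∈ range (m+1),
        ((m.choose k : ℚ) * (ascPochhammer ℚ k).eval x * (ascPochhammer ℚ (m-k)).eval y)
          * (x + y + m)
        = (m.choose k : ℚ) * (ascPochhammer ℚ (k+1)).eval x * (ascPochhammer ℚ (m-k)).eval y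
          + (m.choose k : ℚ) * (ascPochhammer ℚ k).eval x *
            (ascPochhammer ℚ (m+1-k)).eval y := by
      intro k hk
      have hk' : k ≤ m := Nat.lt_succ_iff.mp (mem_range.mp hk)
      have hmk : ((m - k : ℕ) : ℚ) = (m : ℚ) - k := by
        push_cast [hk']; ring
      rw [show m+1-k = (m-k)+1 by omega, ascPochhammer_succ_eval, ascPochhammer_succ_eval,
        hmk]
      ring
    rw [Finset.sum_congr rfl key, Finset.sum_add_distrib]
    rw [Finset.sum_range_succ' (fun k => ((m+1).choose k : ℚ) * (ascPochhammer ℚ k).eval x *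
      (ascPochhammer ℚ (m+1-k)).eval y)]
    simp only [Nat.choose_succ_succ, Nat.succ_sub_succ, Nat.choose_zero_right, Nat.cast_add,
      Nat.cast_one, ascPochhammer_zero, eval_one, Nat.sub_zero]
    rw [Finset.sum_congr rfl (fun k _ => by ring :
      ∀ k ∈ range (m+1), ((m.choose k : ℚ) + (m.choose (k+1) : ℚ)) *
        (ascPochhammer ℚ (k+1)).eval x * (ascPochhammer ℚ (m-k)).eval y
        = (m.choose k : ℚ) * (ascPochhammer ℚ (k+1)).eval x * (ascPochhammer ℚ (m-k)).eval y
        + (m.choose (k+1) : ℚ) * (ascPochhammer ℚ (k+1)).eval x *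
          (ascPochhammer ℚ (m-k)).eval y), Finset.sum_add_distrib]
    have h2 : ∑ k ∈ range (m+1), (m.choose k : ℚ) * (ascPochhammer ℚ k).eval x *
        (ascPochhammer ℚ (m+1-k)).eval y
        = (∑ k ∈ range (m+1), (m.choose (k+1) : ℚ) * (ascPochhammer ℚ (k+1)).eval x *
          (ascPochhammer ℚ (m-k)).eval y) + 1 * 1 * (ascPochhammer ℚ (m+1)).eval y := by
      rw [Finset.sum_range_succ' (fun k => (m.choose k : ℚ) * (ascPochhammer ℚ k).eval x *
        (ascPochhammer ℚ (m+1-k)).eval y)]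
      rw [Finset.sum_range_succ (fun k => (m.choose (k+1) : ℚ) *
        (ascPochhammer ℚ (k+1)).eval x * (ascPochhammer ℚ (m-k)).eval y)]
      simp [Nat.succ_sub_succ, Nat.choose_succ_self]
    rw [h2]
    ring

private lemma poch_triplicate (x : ℚ) : ∀ n : ℕ, (ascPochhammer ℚ (3*n)).eval x =
    27^n * (ascPochhammer ℚ n).eval (x/3) * (ascPochhammer ℚ n).eval ((x+1)/3) *
      (ascPochhammer ℚ n).eval ((x+2)/3)
  | 0 => by simp
  | n+1 => by
    rw [show 3*(n+1) = 3*n+1+1+1 by ring, ascPochhammer_succ_eval, ascPochhammer_succ_eval,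
      ascPochhammer_succ_eval, poch_triplicate x n, ascPochhammer_succ_eval,
      ascPochhammer_succ_eval, ascPochhammer_succ_eval]
    push_cast
    ring

/-- The diagonal coefficient identity for `(1-x-y)^r / (1-x-y-z)`:
its `n`-th diagonal coefficient, written as a double binomial sum, equals the
`n`-th Taylor coefficient of `₃F₂([(1-r)/3, (2-r)/3, (3-r)/3], [1-r, 1], 27 x)`,
stated in denominator-cleared form. -/
theorem diagonal_coeff_eq_hypergeom_coeff (r : ℚ) (n : ℕ) :
    (∑ j ∈ range (n + 1), ∑ k ∈ range (2 * n + 1),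
        ((ascPochhammer ℚ k).eval (-r) / (Nat.factorial k : ℚ)) *
          (Nat.choose k j : ℚ) * (Nat.choose (3 * n - k) (2 * n - k) : ℚ) *
          (Nat.choose (2 * n - k) (n - j) : ℚ)) *
      (ascPochhammer ℚ n).eval (1 - r) * ((Nat.factorial n : ℚ)) ^ 2 =
    27 ^ n * (ascPochhammer ℚ n).eval ((1 - r) / 3) *
      (ascPochhammer ℚ n).eval ((2 - r) / 3) *
      (ascPochhammer ℚ n).eval ((3 - r) / 3) := by
  -- Step 1: collapse the inner `j`-sum by the (natural number) Vandermonde identity.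
  have hstep1 : (∑ j ∈ range (n + 1), ∑ k ∈ range (2 * n + 1),
        ((ascPochhammer ℚ k).eval (-r) / (Nat.factorial k : ℚ)) *
          (Nat.choose k j : ℚ) * (Nat.choose (3 * n - k) (2 * n - k) : ℚ) *
          (Nat.choose (2 * n - k) (n - j) : ℚ))
      = ((2*n).choose n : ℚ) * ∑ k ∈ range (2*n+1),
          ((ascPochhammer ℚ k).eval (-r) / (Nat.factorial k : ℚ)) *
          ((3*n - k).choose (2*n - k) : ℚ) := by
    rw [Finset.sum_comm, Finset.mul_sum]
    refine sum_congr rfl fun k hk => ?_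
    have hk2 : k ≤ 2*n := Nat.lt_succ_iff.mp (mem_range.mp hk)
    have hv : ∑ j ∈ range (n+1),
        (k.choose j : ℚ) * ((2*n - k).choose (n - j) : ℚ) = ((2*n).choose n : ℚ) := by
      have h := Nat.add_choose_eq k (2*n - k) n
      rw [Finset.Nat.sum_antidiagonal_eq_sum_range_succ_mk,
        show k + (2*n - k) = 2*n by omega] at h
      exact_mod_cast congrArg (Nat.cast : ℕ → ℚ) h.symm
    calc ∑ j ∈ range (n+1),
          ((ascPochhammer ℚ k).eval (-r) / (Nat.factorial k : ℚ)) *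
          (k.choose j : ℚ) * ((3*n - k).choose (2*n - k) : ℚ) *
          ((2*n - k).choose (n - j) : ℚ)
        = (((ascPochhammer ℚ k).eval (-r) / (Nat.factorial k : ℚ)) *
            ((3*n - k).choose (2*n - k) : ℚ)) *
          ∑ j ∈ range (n+1), (k.choose j : ℚ) * ((2*n - k).choose (n - j) : ℚ) := by
          rw [Finset.mul_sum]; exact sum_congr rfl fun j _ => by ring
      _ = _ := by rw [hv]; ring
  -- Step 2: the remaining `k`-sum is a Chu–Vandermonde sum.
  have hkey : (∑ k ∈ range (2*n+1),
        ((ascPochhammer ℚ k).eval (-r) / (Nat.factorial k : ℚ)) *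
          ((3*n - k).choose (2*n - k) : ℚ)) * ((2*n).factorial : ℚ)
      = (ascPochhammer ℚ (2*n)).eval (-r + ((n:ℚ)+1)) := by
    rw [poch_add_eval (-r) ((n:ℚ)+1) (2*n), Finset.sum_mul]
    refine sum_congr rfl fun k hk => ?_
    have hk2 : k ≤ 2*n := Nat.lt_succ_iff.mp (mem_range.mp hk)
    have e1 : (ascPochhammer ℚ (2*n-k)).eval ((n:ℚ)+1)
        = (((n+1).ascFactorial (2*n-k) : ℕ) : ℚ) := by
      rw [show ((n:ℚ)+1) = (((n+1 : ℕ) : ℚ)) by push_cast; ring,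
        ← ascPochhammer_eval_cast, ascPochhammer_nat_eq_ascFactorial]
    have e2 : (n+1).ascFactorial (2*n-k) = (2*n-k).factorial * ((3*n-k).choose (2*n-k)) := by
      rw [Nat.ascFactorial_eq_factorial_mul_choose, show n + (2*n-k) = 3*n-k by omega]
    have e3 : ((2*n).choose k) * k.factorial * (2*n-k).factorial = (2*n).factorial :=
      Nat.choose_mul_factorial_mul_factorial hk2
    have hkfac : ((k.factorial : ℕ) : ℚ) ≠ 0 := Nat.cast_ne_zero.mpr k.factorial_ne_zero
    rw [e1, e2, ← e3]
    push_cast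
    field_simp
  -- Step 3: glue the two Pochhammer blocks together.
  have hmul : (ascPochhammer ℚ (3*n)).eval (1-r)
      = (ascPochhammer ℚ n).eval (1-r) * (ascPochhammer ℚ (2*n)).eval (-r + ((n:ℚ)+1)) := by
    rw [show 3*n = n + 2*n by ring, ← ascPochhammer_mul, Polynomial.eval_mul,
      Polynomial.eval_comp, Polynomial.eval_add, Polynomial.eval_X, Polynomial.eval_natCast]
    congr 1
    ring
  have hfac : (((2*n).choose n : ℚ)) * ((n.factorial : ℚ))^2 = ((2*n).factorial : ℚ) := by
    have h := Nat.choose_mul_factorial_mul_factorial (show n ≤ 2*n by omega)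
    rw [show 2*n - n = n by omega] at h
    push_cast [← h]
    ring
  rw [hstep1]
  calc ((2*n).choose n : ℚ) * (∑ k ∈ range (2*n+1),
          ((ascPochhammer ℚ k).eval (-r) / (Nat.factorial k : ℚ)) *
          ((3*n - k).choose (2*n - k) : ℚ)) *
        (ascPochhammer ℚ n).eval (1 - r) * ((Nat.factorial n : ℚ)) ^ 2
      = (ascPochhammer ℚ n).eval (1 - r) * ((∑ k ∈ range (2*n+1),
          ((ascPochhammer ℚ k).eval (-r) / (Nat.factorial k : ℚ)) *
          ((3*n - k).choose (2*n - k) : ℚ)) * ((2*n).factorial : ℚ)) := by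
        rw [← hfac]; ring
    _ = (ascPochhammer ℚ (3*n)).eval (1-r) := by rw [hkey, ← hmul]
    _ = _ := by
        rw [poch_triplicate (1-r) n,
          show (1-r+1)/3 = (2-r)/3 by ring, show (1-r+2)/3 = (3-r)/3 by ring]
end

section
/- For every n ∈ ℕ, Σ_{j=0}^{n} Σ_{k=0}^{2n} ((−1/3)_k / k!) · C(k,j) · C(3n−k, 2n−k) · C(2n−k, n−j) = 27^n · (2/9)_n (5/9)_n (8/9)_n / ((2/3)_n · (n!)²). (This expresses, in coefficient form, that ₃F₂([2/9, 5/9, 8/9], [2/3, 1], 27x) is the diagonal of the algebraic function (1−x−y)^{1/3}/(1−x−y−z).) -/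
open Finset Polynomial

/-- Chu–Vandermonde convolution for rising factorials. -/
lemma poch_vandermonde (a b : ℚ) : ∀ m : ℕ,
    ∑ k ∈ range (m + 1), (ascPochhammer ℚ k).eval a *
        (ascPochhammer ℚ (m - k)).eval b * (m.choose k : ℚ) =
      (ascPochhammer ℚ m).eval (a + b) := by
  intro m
  induction m with
  | zero => simp
  | succ m ih =>
    have e1 : ∑ k ∈ range (m + 2), (ascPochhammer ℚ k).eval a *
          (ascPochhammer ℚ (m + 1 - k)).eval b * ((m + 1).choose k : ℚ) =
        (∑ k ∈ range (m + 1), (ascPochhammer ℚ (k + 1)).eval a *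
          (ascPochhammer ℚ (m - k)).eval b * (m.choose (k + 1) : ℚ) +
          (ascPochhammer ℚ (m + 1)).eval b) +
        ∑ k ∈ range (m + 1), (ascPochhammer ℚ (k + 1)).eval a *
          (ascPochhammer ℚ (m - k)).eval b * (m.choose k : ℚ) := by
      rw [Finset.sum_range_succ' (fun k => (ascPochhammer ℚ k).eval a *
          (ascPochhammer ℚ (m + 1 - k)).eval b * ((m + 1).choose k : ℚ)) (m + 1)]
      simp only [Nat.succ_sub_succ, Nat.choose_succ_succ, Nat.choose_zero_right,
        Nat.sub_zero, Nat.cast_one, Nat.cast_add, ascPochhammer_zero, Polynomial.eval_one]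
      rw [Finset.sum_congr rfl (fun x _ => mul_add ((ascPochhammer ℚ (x + 1)).eval a *
        (ascPochhammer ℚ (m - x)).eval b) ((m.choose x : ℚ)) ((m.choose (x + 1) : ℚ))),
        Finset.sum_add_distrib]
      ring
    have e2 : ∑ k ∈ range (m + 1), (ascPochhammer ℚ (k + 1)).eval a *
          (ascPochhammer ℚ (m - k)).eval b * (m.choose (k + 1) : ℚ) +
          (ascPochhammer ℚ (m + 1)).eval b =
        ∑ k ∈ range (m + 1), (ascPochhammer ℚ k).eval a *
          (ascPochhammer ℚ (m + 1 - k)).eval b * (m.choose k : ℚ) := by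
      have peel := Finset.sum_range_succ' (fun k => (ascPochhammer ℚ k).eval a *
          (ascPochhammer ℚ (m + 1 - k)).eval b * (m.choose k : ℚ)) (m + 1)
      have peel2 := Finset.sum_range_succ (fun k => (ascPochhammer ℚ k).eval a *
          (ascPochhammer ℚ (m + 1 - k)).eval b * (m.choose k : ℚ)) (m + 1)
      simp only [Nat.succ_sub_succ, Nat.choose_zero_right, Nat.sub_zero, Nat.cast_one,
        ascPochhammer_zero, Polynomial.eval_one, Nat.choose_succ_self, Nat.cast_zero,
        mul_zero, add_zero, one_mul, mul_one, Nat.sub_self] at peel peel2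
      rw [← peel2, peel]
    rw [e1, e2, ← Finset.sum_add_distrib, ascPochhammer_succ_eval, ← ih, Finset.sum_mul]
    refine Finset.sum_congr rfl fun k hk => ?_
    have hk' : k ≤ m := Nat.lt_succ_iff.mp (Finset.mem_range.mp hk)
    have hsub : m + 1 - k = (m - k) + 1 := by omega
    have hcast : ((m - k : ℕ) : ℚ) = (m : ℚ) - (k : ℚ) := by
      rw [Nat.cast_sub hk']
    rw [hsub, ascPochhammer_succ_eval, ascPochhammer_succ_eval, hcast]
    ring

/-- Vandermonde for binomial coefficients, range form. -/
lemma choose_vandermonde_range (k n : ℕ) (hk : k ≤ 2 * n) :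
    ∑ j ∈ range (n + 1), (k.choose j : ℚ) * ((2 * n - k).choose (n - j) : ℚ) =
      ((2 * n).choose n : ℚ) := by
  have h : (2 * n).choose n = ∑ j ∈ range (n + 1), k.choose j * (2 * n - k).choose (n - j) := by
    have h := Nat.add_choose_eq k (2 * n - k) n
    rw [Nat.add_sub_cancel' hk] at h
    rw [h, Finset.Nat.sum_antidiagonal_eq_sum_range_succ_mk]
  rw [h]
  push_cast
  ring

/-- Gauss triplication for `(2/3)_{3n}`. -/
lemma trip (n : ℕ) : (ascPochhammer ℚ (3 * n)).eval (2 / 3) =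
    27 ^ n * (ascPochhammer ℚ n).eval (2 / 9) * (ascPochhammer ℚ n).eval (5 / 9) *
      (ascPochhammer ℚ n).eval (8 / 9) := by
  induction n with
  | zero => simp
  | succ n ih =>
    have h3 : 3 * (n + 1) = 3 * n + 1 + 1 + 1 := by ring
    rw [h3, ascPochhammer_succ_eval, ascPochhammer_succ_eval, ascPochhammer_succ_eval, ih,
      ascPochhammer_succ_eval, ascPochhammer_succ_eval, ascPochhammer_succ_eval]
    push_cast
    ring

lemma choose_as_poch (n k : ℕ) (hk : k ≤ 2 * n) :
    ((3 * n - k).choose (2 * n - k) : ℚ) * ((2 * n - k).factorial : ℚ) =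
      (ascPochhammer ℚ (2 * n - k)).eval ((n : ℚ) + 1) := by
  have h1 : (3 * n - k).choose (2 * n - k) = (n + (2 * n - k)).choose (2 * n - k) := by
    congr 1; omega
  have h2 : (ascPochhammer ℕ (2 * n - k)).eval (n + 1) = (n + 1).ascFactorial (2 * n - k) :=
    ascPochhammer_nat_eq_ascFactorial _ _
  have h3 := Nat.ascFactorial_eq_factorial_mul_choose n (2 * n - k)
  have hc : ((n : ℚ) + 1) = ((n + 1 : ℕ) : ℚ) := by push_cast; ring
  rw [hc, ← ascPochhammer_eval_cast, h2, h3, h1]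
  push_cast
  ring

/-- `₃F₂([2/9, 5/9, 8/9], [2/3, 1], 27x)` is the diagonal of
`(1-x-y)^{1/3}/(1-x-y-z)`, stated coefficient-wise. -/
theorem diagonal_coeff_2_9_5_9_8_9 (n : ℕ) :
    ∑ j ∈ range (n + 1), ∑ k ∈ range (2 * n + 1),
        ((ascPochhammer ℚ k).eval (-(1 / 3)) / (Nat.factorial k : ℚ)) *
          (Nat.choose k j : ℚ) * (Nat.choose (3 * n - k) (2 * n - k) : ℚ) *
          (Nat.choose (2 * n - k) (n - j) : ℚ) =
    27 ^ n * (ascPochhammer ℚ n).eval (2 / 9) * (ascPochhammer ℚ n).eval (5 / 9) *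
        (ascPochhammer ℚ n).eval (8 / 9) /
      ((ascPochhammer ℚ n).eval (2 / 3) * (Nat.factorial n : ℚ) ^ 2) := by
  rw [Finset.sum_comm]
  have step1 : ∀ k ∈ range (2 * n + 1),
      ∑ j ∈ range (n + 1),
        ((ascPochhammer ℚ k).eval (-(1 / 3)) / (Nat.factorial k : ℚ)) *
          (Nat.choose k j : ℚ) * (Nat.choose (3 * n - k) (2 * n - k) : ℚ) *
          (Nat.choose (2 * n - k) (n - j) : ℚ) =
      ((ascPochhammer ℚ k).eval (-(1 / 3)) / (Nat.factorial k : ℚ)) *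
        (Nat.choose (3 * n - k) (2 * n - k) : ℚ) * ((2 * n).choose n : ℚ) := by
    intro k hk
    have hk' : k ≤ 2 * n := Nat.lt_succ_iff.mp (Finset.mem_range.mp hk)
    rw [← choose_vandermonde_range k n hk', Finset.mul_sum]
    exact Finset.sum_congr rfl fun j hj => by ring
  rw [Finset.sum_congr rfl step1]
  have key := poch_vandermonde (-(1 / 3)) ((n : ℚ) + 1) (2 * n)
  have keval : (-(1 / 3) : ℚ) + ((n : ℚ) + 1) = (2 / 3) + n := by ring
  rw [keval] at key
  have step2 : ∀ k ∈ range (2 * n + 1),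
      ((ascPochhammer ℚ k).eval (-(1 / 3)) / (Nat.factorial k : ℚ)) *
        (Nat.choose (3 * n - k) (2 * n - k) : ℚ) * ((2 * n).choose n : ℚ) =
      ((ascPochhammer ℚ k).eval (-(1 / 3)) * (ascPochhammer ℚ (2 * n - k)).eval ((n : ℚ) + 1) *
        ((2 * n).choose k : ℚ)) * (((2 * n).choose n : ℚ) / ((2 * n).factorial : ℚ)) := by
    intro k hk
    have hk' : k ≤ 2 * n := Nat.lt_succ_iff.mp (Finset.mem_range.mp hk)
    rw [← choose_as_poch n k hk']
    have hfac : ((2 * n).choose k : ℚ) * (k.factorial : ℚ) * ((2 * n - k).factorial : ℚ) =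
        ((2 * n).factorial : ℚ) := by
      exact_mod_cast congrArg (Nat.cast : ℕ → ℚ)
        (Nat.choose_mul_factorial_mul_factorial hk')
    have hkf : (k.factorial : ℚ) ≠ 0 := Nat.cast_ne_zero.mpr (Nat.factorial_ne_zero k)
    have h2f : ((2 * n).factorial : ℚ) ≠ 0 := Nat.cast_ne_zero.mpr (Nat.factorial_ne_zero _)
    rw [div_mul_eq_mul_div, div_mul_eq_mul_div, mul_div_assoc, ← mul_div_assoc, ← mul_div_assoc, div_eq_div_iff hkf h2f]
    linear_combination (-((ascPochhammer ℚ k).eval (-(1 / 3)) *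
      ((3 * n - k).choose (2 * n - k) : ℚ) * ((2 * n).choose n : ℚ))) * hfac
  rw [Finset.sum_congr rfl step2, ← Finset.sum_mul, key]
  have split : (ascPochhammer ℚ (3 * n)).eval (2 / 3) =
      (ascPochhammer ℚ n).eval (2 / 3) * (ascPochhammer ℚ (2 * n)).eval ((2 / 3 : ℚ) + n) := by
    have h := ascPochhammer_mul (S := ℚ) n (2 * n)
    have h3 : n + 2 * n = 3 * n := by ring
    rw [h3] at h
    have h4 := congrArg (Polynomial.eval ((2 : ℚ) / 3)) h
    rwa [Polynomial.eval_mul, Polynomial.eval_comp, Polynomial.eval_add, Polynomial.eval_X,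
      Polynomial.eval_natCast, eq_comm] at h4
  have htrip := trip n
  rw [split] at htrip
  have hpos : (0 : ℚ) < (ascPochhammer ℚ n).eval (2 / 3) :=
    ascPochhammer_pos n (2 / 3 : ℚ) (by norm_num)
  have hne : (ascPochhammer ℚ n).eval (2 / 3) ≠ 0 := ne_of_gt hpos
  have hnf : (n.factorial : ℚ) ≠ 0 := Nat.cast_ne_zero.mpr (Nat.factorial_ne_zero n)
  have h2f : ((2 * n).factorial : ℚ) ≠ 0 := Nat.cast_ne_zero.mpr (Nat.factorial_ne_zero _)
  have hcc : ((2 * n).choose n : ℚ) * (n.factorial : ℚ) ^ 2 = ((2 * n).factorial : ℚ) := by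
    have h := Nat.choose_mul_factorial_mul_factorial (show n ≤ 2 * n by omega)
    rw [show 2 * n - n = n from by omega] at h
    push_cast [← h]
    ring
  rw [← htrip, ← mul_div_assoc, div_eq_div_iff h2f (mul_ne_zero hne (pow_ne_zero 2 hnf))]
  linear_combination ((ascPochhammer ℚ (2 * n)).eval ((2 / 3 : ℚ) + n) *
    (ascPochhammer ℚ n).eval (2 / 3)) * hcc
end

section
/- For every n ∈ ℕ, Σ_{j=0}^{n} Σ_{k=0}^{2n} ((−2/3)_k / k!) · C(k,j) · C(3n−k, 2n−k) · C(2n−k, n−j) = 27^n · (1/9)_n (4/9)_n (7/9)_n / ((1/3)_n · (n!)²). (This expresses, in coefficient form, that ₃F₂([1/9, 4/9, 7/9], [1/3, 1], 27x) is the diagonal of the algebraic function (1−x−y)^{2/3}/(1−x−y−z).) -/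
/-!
Summing over `j` first is Vandermonde's identity and leaves `C(2n, n)` times
`∑ₖ (-2/3)ₖ/k! · (n+1)₍₂ₙ₋ₖ₎/(2n-k)!`, because `C(3n-k, 2n-k)` is the multiset coefficient
`(n+1)₍₂ₙ₋ₖ₎/(2n-k)!`. The ascending Chu–Vandermonde identity, obtained from the descending one
through `(r)ₖ/k! = (-1)ᵏ C(-r, k)`, collapses the sum over `k` to `(1/3+n)₂ₙ/(2n)!`. Finally
`(1/3)ₙ (1/3+n)₂ₙ = (1/3)₃ₙ`, and Gauss's triplication formula
`(a)₃ₙ = 27ⁿ (a/3)ₙ ((a+1)/3)ₙ ((a+2)/3)ₙ` at `a = 1/3` gives the right-hand side.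
-/

open Finset Polynomial

namespace Ring

theorem multichoose_eq_ascPochhammer_eval_div {K : Type*} [Field K] [CharZero K] (r : K) (n : ℕ) :
    multichoose r n = (ascPochhammer K n).eval r / n.factorial := by
  rw [eq_div_iff (Nat.cast_ne_zero.2 n.factorial_ne_zero), ← ascPochhammer_smeval_eq_eval,
    ← ascPochhammer_smeval_cast ℕ, ← factorial_nsmul_multichoose_eq_ascPochhammer, nsmul_eq_mul,
    mul_comm]

theorem multichoose_natCast_add_one {R : Type*} [Ring R] [BinomialRing R] (n k : ℕ) :
    multichoose ((n : R) + 1) k = (n + k).choose k := by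
  rw [multichoose_eq, add_right_comm, add_sub_cancel_right, ← Nat.cast_add, choose_natCast]

theorem multichoose_eq_negOnePow_smul_choose_neg {R : Type*} [Ring R] [BinomialRing R] (r : R)
    (n : ℕ) : multichoose r n = Int.negOnePow n • choose (-r) n := by
  rw [choose_neg', smul_smul, ← Int.negOnePow_add, Int.negOnePow_even _ ⟨_, rfl⟩, one_smul]

theorem multichoose_add_eq {R : Type*} [Ring R] [BinomialRing R] {r s : R} (k : ℕ)
    (h : Commute r s) :
    multichoose (r + s) k = ∑ ij ∈ antidiagonal k, multichoose r ij.1 * multichoose s ij.2 := by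
  rw [multichoose_eq_negOnePow_smul_choose_neg, neg_add, add_choose_eq k h.neg_left.neg_right,
    smul_sum]
  refine sum_congr rfl fun ij hij => ?_
  rw [multichoose_eq_negOnePow_smul_choose_neg, multichoose_eq_negOnePow_smul_choose_neg,
    smul_mul_smul_comm, ← Int.negOnePow_add, ← Nat.cast_add, mem_antidiagonal.1 hij]

end Ring

theorem ascPochhammer_eval_add {S : Type*} [CommSemiring S] (a : S) (m n : ℕ) :
    (ascPochhammer S (m + n)).eval a =
      (ascPochhammer S m).eval a * (ascPochhammer S n).eval (a + m) := by
  rw [← ascPochhammer_mul, eval_mul, eval_comp, eval_add, eval_X, eval_natCast]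

theorem ascPochhammer_eval_three_mul {K : Type*} [Field K] (h3 : (3 : K) ≠ 0) (a : K) (n : ℕ) :
    (ascPochhammer K (3 * n)).eval a = 27 ^ n * (ascPochhammer K n).eval (a / 3) *
      (ascPochhammer K n).eval ((a + 1) / 3) * (ascPochhammer K n).eval ((a + 2) / 3) := by
  induction n with
  | zero => simp
  | succ n ih =>
    rw [show 3 * (n + 1) = 3 * n + 1 + 1 + 1 by ring]
    simp only [ascPochhammer_succ_eval, ih]
    field_simp
    push_cast
    ring

theorem Nat.sum_range_choose_mul_choose (m l r : ℕ) :
    ∑ j ∈ range (r + 1), m.choose j * l.choose (r - j) = (m + l).choose r := by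
  rw [Nat.add_choose_eq, Nat.sum_antidiagonal_eq_sum_range_succ_mk]

/-- `₃F₂([1/9, 4/9, 7/9], [1/3, 1], 27x)` is the diagonal of
`(1-x-y)^{2/3}/(1-x-y-z)`, stated coefficient-wise. -/
theorem diagonal_coeff_1_9_4_9_7_9 (n : ℕ) :
    ∑ j ∈ range (n + 1), ∑ k ∈ range (2 * n + 1),
        ((ascPochhammer ℚ k).eval (-(2 / 3)) / (Nat.factorial k : ℚ)) *
          (Nat.choose k j : ℚ) * (Nat.choose (3 * n - k) (2 * n - k) : ℚ) *
          (Nat.choose (2 * n - k) (n - j) : ℚ) =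
    27 ^ n * (ascPochhammer ℚ n).eval (1 / 9) * (ascPochhammer ℚ n).eval (4 / 9) *
        (ascPochhammer ℚ n).eval (7 / 9) /
      ((ascPochhammer ℚ n).eval (1 / 3) * (Nat.factorial n : ℚ) ^ 2) := by
  have inner_sum : ∀ k ∈ range (2 * n + 1),
      ∑ j ∈ range (n + 1), ((ascPochhammer ℚ k).eval (-(2 / 3)) / (Nat.factorial k : ℚ)) *
          (Nat.choose k j : ℚ) * (Nat.choose (3 * n - k) (2 * n - k) : ℚ) *
          (Nat.choose (2 * n - k) (n - j) : ℚ) =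
        Ring.multichoose (-(2 / 3) : ℚ) k * Ring.multichoose ((n : ℚ) + 1) (2 * n - k) *
          (2 * n).choose n := by
    intro k hk
    have hk : k ≤ 2 * n := Nat.lt_succ_iff.1 (mem_range.1 hk)
    have hv :
        (2 * n).choose n = ∑ j ∈ range (n + 1), k.choose j * (2 * n - k).choose (n - j) := by
      rw [Nat.sum_range_choose_mul_choose, Nat.add_sub_cancel' hk]
    rw [Ring.multichoose_eq_ascPochhammer_eval_div, Ring.multichoose_natCast_add_one,
      show n + (2 * n - k) = 3 * n - k by omega, hv, Nat.cast_sum, mul_sum]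
    refine sum_congr rfl fun j _ => ?_
    push_cast
    ring
  have vandermonde : ∑ k ∈ range (2 * n + 1),
      Ring.multichoose (-(2 / 3) : ℚ) k * Ring.multichoose ((n : ℚ) + 1) (2 * n - k) =
        Ring.multichoose (1 / 3 + n : ℚ) (2 * n) := by
    rw [show (1 / 3 + n : ℚ) = -(2 / 3) + (n + 1) by ring,
      Ring.multichoose_add_eq _ (Commute.all _ _), Nat.sum_antidiagonal_eq_sum_range_succ_mk]
  have triplication :
      27 ^ n * (ascPochhammer ℚ n).eval (1 / 9) * (ascPochhammer ℚ n).eval (4 / 9) *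
        (ascPochhammer ℚ n).eval (7 / 9) =
        (ascPochhammer ℚ n).eval (1 / 3) * (ascPochhammer ℚ (2 * n)).eval (1 / 3 + (n : ℚ)) := by
    rw [← ascPochhammer_eval_add, ← show 3 * n = n + 2 * n by ring,
      ascPochhammer_eval_three_mul (by norm_num)]
    norm_num
  rw [sum_comm, sum_congr rfl inner_sum, ← sum_mul, vandermonde, triplication,
    Ring.multichoose_eq_ascPochhammer_eval_div, Nat.cast_choose ℚ (by omega : n ≤ 2 * n),
    show 2 * n - n = n by omega]
  have hpoch : (ascPochhammer ℚ n).eval (1 / 3) ≠ 0 := (ascPochhammer_pos n _ (by norm_num)).ne'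
  field_simp
end

section
/- Let r ∈ ℚ and for n ∈ ℕ set S(n) = C(2n, n) · Σ_{k=0}^{2n} ((−r)_k / k!) · C(3n−k, 2n−k) ∈ ℚ. Then for every n ∈ ℕ, (r − 3 − 3n)(r − 2 − 3n)(r − 1 − 3n) · S(n) = (n+1)² · (r − 1 − n) · S(n+1). -/
open Finset Polynomial

lemma descP_smeval_eq_eval (x : ℚ) (k : ℕ) :
    (descPochhammer ℤ k).smeval x = (descPochhammer ℚ k).eval x := by
  rw [Polynomial.descPochhammer_smeval_eq_ascPochhammer,
    Polynomial.ascPochhammer_smeval_eq_eval, ← descPochhammer_eval_eq_ascPochhammer]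

lemma vander (a b : ℚ) (m : ℕ) :
    (descPochhammer ℚ m).eval (a + b) = ∑ k ∈ range (m+1),
      (m.choose k : ℚ) * ((descPochhammer ℚ k).eval a * (descPochhammer ℚ (m-k)).eval b) := by
  have h := Ring.descPochhammer_smeval_add (R := ℚ) (r := a) (s := b) m (Commute.all a b)
  rw [Finset.Nat.sum_antidiagonal_eq_sum_range_succ_mk] at h
  simpa [descP_smeval_eq_eval] using h

lemma sumT (r : ℚ) (n : ℕ) :
    ∑ k ∈ range (2*n+1),
        ((ascPochhammer ℚ k).eval (-r) / (Nat.factorial k : ℚ)) *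
          (Nat.choose (3*n-k) (2*n-k) : ℚ)
      = (descPochhammer ℚ (2*n)).eval (r - n - 1) / (Nat.factorial (2*n) : ℚ) := by
  have hab : (r : ℚ) - n - 1 = r + (-(n+1)) := by ring
  rw [hab, vander, Finset.sum_div]
  refine Finset.sum_congr rfl ?_
  intro k hk
  have hk2 : k ≤ 2*n := by simpa using Nat.lt_succ_iff.mp (Finset.mem_range.mp hk)
  set q := 2*n - k with hq
  -- descPochhammer at -(n+1)
  have h2 : (descPochhammer ℚ q).eval (-((n:ℚ)+1))
      = (-1)^q * ((Nat.factorial q : ℚ) * ((3*n-k).choose (2*n-k) : ℚ)) := by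
    rw [descPochhammer_eval_eq_ascPochhammer]
    have : -((n:ℚ)+1) - q + 1 = -(((n + q : ℕ) : ℚ)) := by push_cast; ring
    rw [this, ascPochhammer_eval_neg_eq_descPochhammer,
      descPochhammer_eval_eq_descFactorial,
      Nat.descFactorial_eq_factorial_mul_choose]
    have h3 : n + q = 3*n - k := by omega
    rw [h3, ← hq]
    push_cast
    ring
  have h1 : (descPochhammer ℚ k).eval r = (-1)^k * (ascPochhammer ℚ k).eval (-r) := by
    rw [ascPochhammer_eval_neg_eq_descPochhammer, ← mul_assoc, ← pow_add,
      Even.neg_one_pow ⟨k, rfl⟩, one_mul]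
  have hfac : ((2*n).choose k : ℚ) * (Nat.factorial k : ℚ) * (Nat.factorial q : ℚ)
      = (Nat.factorial (2*n) : ℚ) := by
    rw [hq]
    exact_mod_cast congrArg (Nat.cast (R := ℚ)) (Nat.choose_mul_factorial_mul_factorial hk2)
  have hsign : ((-1:ℚ))^k * (-1)^q = 1 := by
    rw [← pow_add]
    exact Even.neg_one_pow ⟨n, by omega⟩
  rw [h1, h2]
  have hkne : (Nat.factorial k : ℚ) ≠ 0 := Nat.cast_ne_zero.2 (Nat.factorial_ne_zero k)
  have h2ne : (Nat.factorial (2*n) : ℚ) ≠ 0 := Nat.cast_ne_zero.2 (Nat.factorial_ne_zero _)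
  rw [div_mul_eq_mul_div, div_eq_div_iff hkne h2ne]
  linear_combination
    (-((ascPochhammer ℚ k).eval (-r) * ((3*n-k).choose (2*n-k) : ℚ))) * hfac +
    (-((ascPochhammer ℚ k).eval (-r) * ((3*n-k).choose (2*n-k) : ℚ) *
      (((2*n).choose k : ℚ) * (Nat.factorial k : ℚ) * (Nat.factorial q : ℚ)))) * hsign

/-- The first-order recurrence (obtained by creative telescoping) satisfied by
`S(n) = C(2n,n) · ∑_{k=0}^{2n} ((-r)_k / k!) · C(3n-k, 2n-k)`, the `n`-th
diagonal coefficient of `(1-x-y)^r/(1-x-y-z)`: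
`(r-3-3n)(r-2-3n)(r-1-3n) S(n) = (n+1)² (r-1-n) S(n+1)`. -/
theorem diagonal_recurrence (r : ℚ) (n : ℕ) :
    (fun S : ℕ → ℚ =>
      (r - 3 - 3 * (n : ℚ)) * (r - 2 - 3 * (n : ℚ)) * (r - 1 - 3 * (n : ℚ)) * S n =
        ((n : ℚ) + 1) ^ 2 * (r - 1 - (n : ℚ)) * S (n + 1))
    (fun m => (Nat.choose (2 * m) m : ℚ) *
      ∑ k ∈ range (2 * m + 1),
        ((ascPochhammer ℚ k).eval (-r) / (Nat.factorial k : ℚ)) *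
          (Nat.choose (3 * m - k) (2 * m - k) : ℚ)) := by
  simp only
  rw [sumT r n, sumT r (n+1)]
  set a := r - (n:ℚ) - 1 with ha
  have hcast : r - ((n+1 : ℕ):ℚ) - 1 = a - 1 := by push_cast [ha]; ring
  have h2n : 2*(n+1) = 2*n+2 := by ring
  rw [h2n, hcast]
  have h1 : (descPochhammer ℚ (2*n+2)).eval a
      = (descPochhammer ℚ (2*n)).eval a * (a - (2*n:ℕ)) * (a - ((2*n+1:ℕ):ℚ)) := by
    rw [show 2*n+2 = (2*n+1)+1 from rfl, descPochhammer_succ_eval, descPochhammer_succ_eval]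
  have h2 : (descPochhammer ℚ (2*n+2)).eval a
      = a * (descPochhammer ℚ (2*n+1)).eval (a - 1) := by
    rw [show 2*n+2 = (2*n+1)+1 from rfl, descPochhammer_succ_left]
    simp [Polynomial.eval_comp]
  have h3 : (descPochhammer ℚ (2*n+2)).eval (a-1)
      = (descPochhammer ℚ (2*n+1)).eval (a-1) * ((a-1) - ((2*n+1:ℕ):ℚ)) := by
    rw [show 2*n+2 = (2*n+1)+1 from rfl, descPochhammer_succ_eval]
  have key : a * (descPochhammer ℚ (2*n+2)).eval (a-1)
      = (descPochhammer ℚ (2*n)).eval a *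
        ((a - (2*n:ℕ)) * (a - ((2*n+1:ℕ):ℚ)) * ((a-1) - ((2*n+1:ℕ):ℚ))) := by
    rw [h3]
    linear_combination (-((a-1) - ((2*n+1:ℕ):ℚ))) * h2 + ((a-1) - ((2*n+1:ℕ):ℚ)) * h1
  have e1 : ((2*n).choose n : ℚ) = (Nat.factorial (2*n) : ℚ) /
      ((Nat.factorial n : ℚ) * (Nat.factorial n : ℚ)) := by
    rw [Nat.cast_choose ℚ (by omega : n ≤ 2*n), show 2*n - n = n by omega]
  have e2 : ((2*n+2).choose (n+1) : ℚ) = (Nat.factorial (2*n+2) : ℚ) /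
      ((Nat.factorial (n+1) : ℚ) * (Nat.factorial (n+1) : ℚ)) := by
    rw [Nat.cast_choose ℚ (by omega : n+1 ≤ 2*n+2), show 2*n+2 - (n+1) = n+1 by omega]
  have e3 : (Nat.factorial (2*n+2) : ℚ)
      = ((2*n+2 : ℕ):ℚ) * ((2*n+1 : ℕ):ℚ) * (Nat.factorial (2*n) : ℚ) := by
    rw [show 2*n+2 = (2*n+1)+1 from rfl, Nat.factorial_succ, Nat.factorial_succ]
    push_cast; ring
  have e4 : (Nat.factorial (n+1) : ℚ) = ((n:ℚ)+1) * (Nat.factorial n : ℚ) := by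
    rw [Nat.factorial_succ]; push_cast; ring
  have hC : ((2*n).choose n : ℚ) * (Nat.factorial (2*n+2) : ℚ)
      = ((n:ℚ)+1)^2 * ((2*n+2).choose (n+1) : ℚ) * (Nat.factorial (2*n) : ℚ) := by
    have hn : (Nat.factorial n : ℚ) ≠ 0 := Nat.cast_ne_zero.2 (Nat.factorial_ne_zero n)
    rw [e1, e2, e3, e4]
    field_simp
  have f1 : (Nat.factorial (2*n) : ℚ) ≠ 0 := Nat.cast_ne_zero.2 (Nat.factorial_ne_zero _)
  have f2 : (Nat.factorial (2*n+2) : ℚ) ≠ 0 := Nat.cast_ne_zero.2 (Nat.factorial_ne_zero _)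
  field_simp
  push_cast at key ⊢
  linear_combination
    ((descPochhammer ℚ (2*n)).eval a * ((r - 1 - 3*(n:ℚ)) * (r - 2 - 3*(n:ℚ)) * (r - 3 - 3*(n:ℚ)))) * hC
    + (-(((n:ℚ)+1)^2 * ((2*n+2).choose (n+1) : ℚ) * (Nat.factorial (2*n) : ℚ))) * key
end

section
/- Let a, b be integers with 0 < a < b, and let f ∈ ℚ[[X]] be the formal power series with n-th coefficient c_n = 27^n · ((b−a)/(3b))_n ((2b−a)/(3b))_n ((3b−a)/(3b))_n / (((b−a)/b)_n · (n!)²). Then f is annihilated by the third-order differential operator b³x²(1−27x)·D³ + b²x((27a−135b)x − a + 3b)·D² − b((9a² − 63ab + 114b²)x + ab − b²)·D + (a−3b)(a−2b)(a−b); that is, as formal power series, b³X²(1−27X)·f''' + b²X((27a−135b)X − a + 3b)·f'' − b((9a²−63ab+114b²)X + ab − b²)·f' + (a−3b)(a−2b)(a−b)·f = 0, where f', f'', f''' denote formal derivatives. -/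
/-!
The operator acts on coefficients as a two-term recurrence: the `n`-th coefficient of its image
of `∑ cₙ Xⁿ` is `b²(n+1)²(b(n+1) - a) c_{n+1} - (3bn+b-a)(3bn+2b-a)(3bn+3b-a) cₙ`. The
hypergeometric coefficients satisfy exactly this recurrence, since `(α)_{n+1} = (α)_n (α + n)`.
-/

open PowerSeries Nat

section Hypergeometric

variable {K : Type*} [Field K]

noncomputable def hypergeometric32Coeff (α β γ δ z : K) (n : ℕ) : K :=
  z ^ n * (ascPochhammer K n).eval α * (ascPochhammer K n).eval β * (ascPochhammer K n).eval γ /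
    ((ascPochhammer K n).eval δ * (n ! : K) ^ 2)

theorem hypergeometric32Coeff_succ [CharZero K] (α β γ δ z : K) (n : ℕ)
    (hδ : (ascPochhammer K (n + 1)).eval δ ≠ 0) :
    (δ + n) * (n + 1) ^ 2 * hypergeometric32Coeff α β γ δ z (n + 1) =
      z * (α + n) * (β + n) * (γ + n) * hypergeometric32Coeff α β γ δ z n := by
  rw [ascPochhammer_succ_eval, mul_ne_zero_iff] at hδ
  obtain ⟨hδn, hδ⟩ := hδ
  have hn : (n + 1 : K) ≠ 0 := by exact_mod_cast n.succ_ne_zero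
  have hfac : (n ! : K) ≠ 0 := by exact_mod_cast n.factorial_ne_zero
  simp only [hypergeometric32Coeff, ascPochhammer_succ_eval, factorial_succ, cast_mul, cast_succ]
  field_simp
  ring

end Hypergeometric

section Coefficients

variable {R : Type*} [CommRing R]

theorem coeff_X_pow_mul_iterate_derivative (f : R⟦X⟧) (j n : ℕ) :
    coeff n (X ^ j * (d⁄dX R)^[j] f) = n.descFactorial j * coeff n f := by
  rw [coeff_X_pow_mul']
  split_ifs with h
  · obtain ⟨m, rfl⟩ := Nat.exists_eq_add_of_le' h
    rw [Nat.add_sub_cancel, coeff_iterate_derivative, add_descFactorial_eq_ascFactorial]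
  · rw [Nat.descFactorial_eq_zero_iff_lt.mpr (not_le.mp h), cast_zero, zero_mul]

theorem coeff_X_pow_mul_iterate_derivative_succ (f : R⟦X⟧) (j n : ℕ) :
    coeff n (X ^ j * (d⁄dX R)^[j + 1] f) = (n + 1).descFactorial (j + 1) * coeff (n + 1) f := by
  rw [Function.iterate_succ_apply, coeff_X_pow_mul_iterate_derivative, coeff_derivative,
    succ_descFactorial_succ]
  push_cast
  ring

noncomputable def telescoper (a b : R) (f : R⟦X⟧) : R⟦X⟧ :=
  C (b ^ 3) * X ^ 2 * (1 - 27 * X) * (d⁄dX R (d⁄dX R (d⁄dX R f))) +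
    C (b ^ 2) * X * (C (27 * a - 135 * b) * X + C (-a + 3 * b)) * (d⁄dX R (d⁄dX R f)) -
    C b * (C (9 * a ^ 2 - 63 * a * b + 114 * b ^ 2) * X + C (a * b - b ^ 2)) * (d⁄dX R f) +
    C ((a - 3 * b) * (a - 2 * b) * (a - b)) * f

theorem coeff_telescoper (a b : R) (f : R⟦X⟧) (n : ℕ) :
    coeff n (telescoper a b f) =
      b ^ 2 * (n + 1) ^ 2 * (b * (n + 1) - a) * coeff (n + 1) f -
        (3 * b * n + b - a) * (3 * b * n + 2 * b - a) * (3 * b * n + 3 * b - a) * coeff n f := by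
  -- `X ^ j * D^[j]` multiplies the `n`-th coefficient by `n.descFactorial j`, while
  -- `X ^ j * D^[j + 1]` also shifts the index by one.
  have hdecomp : telescoper a b f =
      C (b ^ 3) * (X ^ 2 * (d⁄dX R)^[2 + 1] f)
        + C (b ^ 2 * (3 * b - a)) * (X ^ 1 * (d⁄dX R)^[1 + 1] f)
        - C (b * (a * b - b ^ 2)) * (X ^ 0 * (d⁄dX R)^[0 + 1] f)
        - C (27 * b ^ 3) * (X ^ 3 * (d⁄dX R)^[3] f)
        + C (b ^ 2 * (27 * a - 135 * b)) * (X ^ 2 * (d⁄dX R)^[2] f)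
        - C (b * (9 * a ^ 2 - 63 * a * b + 114 * b ^ 2)) * (X ^ 1 * (d⁄dX R)^[1] f)
        + C ((a - 3 * b) * (a - 2 * b) * (a - b)) * (X ^ 0 * (d⁄dX R)^[0] f) := by
    simp only [telescoper, map_mul, map_sub, map_add, map_pow, map_neg, map_ofNat,
      Function.iterate_succ_apply', Function.iterate_zero_apply]
    ring
  simp only [hdecomp, map_add, map_sub, coeff_C_mul, coeff_X_pow_mul_iterate_derivative,
    coeff_X_pow_mul_iterate_derivative_succ, ← descPochhammer_eval_eq_descFactorial,
    descPochhammer_succ_eval, descPochhammer_zero, Polynomial.eval_one]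
  push_cast
  ring

end Coefficients

/-- The hypergeometric series
`₃F₂([(b-a)/(3b), (2b-a)/(3b), (3b-a)/(3b)], [(b-a)/b, 1], 27X)`
(the diagonal of `(1-x-y)^{a/b}/(1-x-y-z)`, for integers `0 < a < b`) is
annihilated by the third-order operator
`b³x²(1-27x) D³ + b²x((27a-135b)x - a + 3b) D² - b((9a²-63ab+114b²)x + ab - b²) D
 + (a-3b)(a-2b)(a-b)`. -/
theorem hypergeom_annihilated_by_telescoper (a b : ℤ) (ha : 0 < a) (hab : a < b) :
    (fun f : PowerSeries ℚ =>
      C ((b : ℚ) ^ 3) * X ^ 2 * (1 - 27 * X) * (d⁄dX ℚ (d⁄dX ℚ (d⁄dX ℚ f))) +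
        C ((b : ℚ) ^ 2) * X *
          (C (27 * (a : ℚ) - 135 * (b : ℚ)) * X + C (-(a : ℚ) + 3 * (b : ℚ))) *
          (d⁄dX ℚ (d⁄dX ℚ f)) -
        C (b : ℚ) *
          (C (9 * (a : ℚ) ^ 2 - 63 * (a : ℚ) * (b : ℚ) + 114 * (b : ℚ) ^ 2) * X +
            C ((a : ℚ) * (b : ℚ) - (b : ℚ) ^ 2)) * (d⁄dX ℚ f) +
        C (((a : ℚ) - 3 * (b : ℚ)) * ((a : ℚ) - 2 * (b : ℚ)) * ((a : ℚ) - (b : ℚ))) * f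
      = 0)
    (PowerSeries.mk fun n =>
      27 ^ n * (ascPochhammer ℚ n).eval (((b : ℚ) - (a : ℚ)) / (3 * (b : ℚ))) *
          (ascPochhammer ℚ n).eval ((2 * (b : ℚ) - (a : ℚ)) / (3 * (b : ℚ))) *
          (ascPochhammer ℚ n).eval ((3 * (b : ℚ) - (a : ℚ)) / (3 * (b : ℚ))) /
        ((ascPochhammer ℚ n).eval (((b : ℚ) - (a : ℚ)) / (b : ℚ)) *
          (Nat.factorial n : ℚ) ^ 2)) := by
  have hb : (0 : ℚ) < b := by exact_mod_cast ha.trans hab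
  have hδ : 0 < ((b : ℚ) - a) / b := div_pos (sub_pos.mpr (by exact_mod_cast hab)) hb
  show telescoper (a : ℚ) b (mk (hypergeometric32Coeff _ _ _ _ 27)) = 0
  ext n
  have hrec := hypergeometric32Coeff_succ (((b : ℚ) - a) / (3 * b)) ((2 * b - a) / (3 * b))
    ((3 * b - a) / (3 * b)) _ 27 n (ascPochhammer_pos _ _ hδ).ne'
  generalize hypergeometric32Coeff (((b : ℚ) - a) / (3 * b)) ((2 * b - a) / (3 * b))
    ((3 * b - a) / (3 * b)) ((b - a) / b) 27 = c at hrec ⊢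
  rw [coeff_telescoper, coeff_mk, coeff_mk, map_zero]
  field_simp at hrec
  linear_combination hrec / 27
end

section
/- For every n ∈ ℕ, Σ_{k=0}^{n} ((−1/3)_k / k!) · C(3n−k, n) · C(2n−k, n) = 27^n · (2/9)_n (5/9)_n (8/9)_n (1/2)_n / ((1/3)_n (5/6)_n · (n!)²). (This expresses, in coefficient form, that the diagonal of (1−x)^{1/3}/(1−x−y−z) equals ₄F₃([2/9, 5/9, 8/9, 1/2], [1/3, 5/6, 1], 27x).) -/
open Finset

noncomputable def cc (k : ℕ) : ℚ :=
  (ascPochhammer ℚ k).eval (-(1 / 3)) / (Nat.factorial k : ℚ)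

noncomputable def Ff (n k : ℕ) : ℚ :=
  cc k * (Nat.choose (3 * n - k) n : ℚ) * (Nat.choose (2 * n - k) n : ℚ)

noncomputable def NN (n k : ℕ) : ℚ :=
  (k : ℚ) * (-78 - 462 * n - 846 * n ^ 2 - 486 * n ^ 3) +
    (k : ℚ) ^ 2 * (195 + 921 * n + 1431 * n ^ 2 + 729 * n ^ 3) +
    (k : ℚ) ^ 3 * (-126 - 396 * n - 324 * n ^ 2) + (k : ℚ) ^ 4 * (9 + 27 * n)

noncomputable def GG (n k : ℕ) : ℚ :=
  cc k * (Nat.choose (3 * n - k) n : ℚ) * (Nat.choose (2 * n - k) (n - 1) : ℚ) * NN n k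

noncomputable def P0 (n : ℕ) : ℚ := (9 * n + 2) * (9 * n + 5) * (9 * n + 8) * (2 * n + 1)
noncomputable def P1 (n : ℕ) : ℚ := -3 * (3 * n + 1) * (6 * n + 5) * ((n : ℚ) + 1) ^ 2

noncomputable def Rr (n : ℕ) : ℚ :=
  27 ^ n * (ascPochhammer ℚ n).eval (2 / 9) * (ascPochhammer ℚ n).eval (5 / 9) *
      (ascPochhammer ℚ n).eval (8 / 9) * (ascPochhammer ℚ n).eval (1 / 2) /
    ((ascPochhammer ℚ n).eval (1 / 3) * (ascPochhammer ℚ n).eval (5 / 6) *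
      (Nat.factorial n : ℚ) ^ 2)

lemma cast_choose'' {a b c : ℕ} (h : a = b + c) :
    ((a.choose b : ℚ)) = (Nat.factorial a : ℚ) / (Nat.factorial b * Nat.factorial c) := by
  subst h
  rw [Nat.cast_choose ℚ (Nat.le_add_right b c), Nat.add_sub_cancel_left]

lemma cc_succ (k : ℕ) : cc (k + 1) = cc k * (-(1 / 3) + (k : ℚ)) / ((k : ℚ) + 1) := by
  unfold cc
  rw [ascPochhammer_succ_right, Polynomial.eval_mul, Polynomial.eval_add,
    Polynomial.eval_X, Polynomial.eval_natCast, Nat.factorial_succ]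
  push_cast
  have h1 : ((Nat.factorial k : ℚ)) ≠ 0 := Nat.cast_ne_zero.mpr (Nat.factorial_ne_zero _)
  have h2 : ((k : ℚ) + 1) ≠ 0 := by positivity
  field_simp
  try ring
  try simp

lemma poch_pos (q : ℚ) (hq : 0 < q) (n : ℕ) : 0 < (ascPochhammer ℚ n).eval q := by
  induction n with
  | zero => simp
  | succ n ih =>
    rw [ascPochhammer_succ_right, Polynomial.eval_mul, Polynomial.eval_add,
      Polynomial.eval_X, Polynomial.eval_natCast]
    have : (0 : ℚ) < q + n := by positivity
    positivity

set_option maxHeartbeats 4000000 in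
lemma cert (n k : ℕ) (hn : 1 ≤ n) (hk : k ≤ n) :
    (n : ℚ) * (P0 n * Ff n k + P1 n * Ff (n + 1) k) = GG n (k + 1) - GG n k := by
  rcases lt_or_eq_of_le hk with hlt | rfl
  · -- k < n, write n = k + j + 1
    obtain ⟨j, rfl⟩ : ∃ j, n = k + j + 1 := ⟨n - k - 1, by omega⟩
    unfold Ff GG P0 P1 NN
    rw [cc_succ]
    rw [show 3 * (k + j + 1) - k = 2 * k + 3 * j + 3 by omega,
        show 2 * (k + j + 1) - k = k + 2 * j + 2 by omega,
        show 3 * (k + j + 1 + 1) - k = 2 * k + 3 * j + 6 by omega,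
        show 2 * (k + j + 1 + 1) - k = k + 2 * j + 4 by omega,
        show 3 * (k + j + 1) - (k + 1) = 2 * k + 3 * j + 2 by omega,
        show 2 * (k + j + 1) - (k + 1) = k + 2 * j + 1 by omega,
        show k + j + 1 - 1 = k + j by omega]
    rw [cast_choose'' (show 2 * k + 3 * j + 3 = (k + j + 1) + (k + 2 * j + 2) by ring),
        cast_choose'' (show k + 2 * j + 2 = (k + j + 1) + (j + 1) by ring),
        cast_choose'' (show 2 * k + 3 * j + 6 = (k + j + 1 + 1) + (k + 2 * j + 4) by ring),
        cast_choose'' (show k + 2 * j + 4 = (k + j + 1 + 1) + (j + 2) by ring),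
        cast_choose'' (show 2 * k + 3 * j + 2 = (k + j + 1) + (k + 2 * j + 1) by ring),
        cast_choose'' (show k + 2 * j + 1 = (k + j) + (j + 1) by ring),
        cast_choose'' (show k + 2 * j + 2 = (k + j) + (j + 2) by ring)]
    have h1 : ((Nat.factorial (2 * k + 3 * j + 3) : ℚ)) =
        (2 * (k:ℚ) + 3 * j + 3) * (Nat.factorial (2 * k + 3 * j + 2)) := by
      rw [show 2 * k + 3 * j + 3 = (2 * k + 3 * j + 2) + 1 by ring, Nat.factorial_succ]
      push_cast; ring
    have h2 : ((Nat.factorial (2 * k + 3 * j + 6) : ℚ)) =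
        (2 * (k:ℚ) + 3 * j + 6) * (2 * k + 3 * j + 5) * (2 * k + 3 * j + 4) * (2 * k + 3 * j + 3) *
          (Nat.factorial (2 * k + 3 * j + 2)) := by
      rw [show 2 * k + 3 * j + 6 = (2 * k + 3 * j + 2) + 1 + 1 + 1 + 1 by ring,
        Nat.factorial_succ, Nat.factorial_succ, Nat.factorial_succ, Nat.factorial_succ]
      push_cast; ring
    have h3 : ((Nat.factorial (k + 2 * j + 2) : ℚ)) =
        ((k:ℚ) + 2 * j + 2) * (Nat.factorial (k + 2 * j + 1)) := by
      rw [show k + 2 * j + 2 = (k + 2 * j + 1) + 1 by ring, Nat.factorial_succ]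
      push_cast; ring
    have h4 : ((Nat.factorial (k + 2 * j + 4) : ℚ)) =
        ((k:ℚ) + 2 * j + 4) * ((k:ℚ) + 2 * j + 3) * ((k:ℚ) + 2 * j + 2) *
          (Nat.factorial (k + 2 * j + 1)) := by
      rw [show k + 2 * j + 4 = (k + 2 * j + 1) + 1 + 1 + 1 by ring,
        Nat.factorial_succ, Nat.factorial_succ, Nat.factorial_succ]
      push_cast; ring
    have h5 : ((Nat.factorial (k + j + 1) : ℚ)) = ((k:ℚ) + j + 1) * (Nat.factorial (k + j)) := by
      rw [show k + j + 1 = (k + j) + 1 by ring, Nat.factorial_succ]; push_cast; ring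
    have h6 : ((Nat.factorial (k + j + 1 + 1) : ℚ)) =
        ((k:ℚ) + j + 2) * ((k:ℚ) + j + 1) * (Nat.factorial (k + j)) := by
      rw [show k + j + 1 + 1 = (k + j) + 1 + 1 by ring, Nat.factorial_succ, Nat.factorial_succ]
      push_cast; ring
    have h7 : ((Nat.factorial (j + 1) : ℚ)) = ((j:ℚ) + 1) * (Nat.factorial j) := by
      rw [Nat.factorial_succ]; push_cast; ring
    have h8 : ((Nat.factorial (j + 2) : ℚ)) = ((j:ℚ) + 2) * ((j:ℚ) + 1) * (Nat.factorial j) := by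
      rw [show j + 2 = j + 1 + 1 by ring, Nat.factorial_succ, Nat.factorial_succ]
      push_cast; ring
    simp only [h1, h2, h3, h4, h5, h6, h7, h8]
    have hA : ((Nat.factorial (2 * k + 3 * j + 2) : ℚ)) ≠ 0 :=
      Nat.cast_ne_zero.mpr (Nat.factorial_ne_zero _)
    have hB : ((Nat.factorial (k + 2 * j + 1) : ℚ)) ≠ 0 :=
      Nat.cast_ne_zero.mpr (Nat.factorial_ne_zero _)
    have hC : ((Nat.factorial (k + j) : ℚ)) ≠ 0 :=
      Nat.cast_ne_zero.mpr (Nat.factorial_ne_zero _)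
    have hD : ((Nat.factorial j : ℚ)) ≠ 0 := Nat.cast_ne_zero.mpr (Nat.factorial_ne_zero _)
    have e1 : ((k:ℚ) + 1) ≠ 0 := by positivity
    have e2 : ((j:ℚ) + 1) ≠ 0 := by positivity
    have e3 : ((j:ℚ) + 2) ≠ 0 := by positivity
    have e4 : ((k:ℚ) + j + 1) ≠ 0 := by positivity
    have e5 : ((k:ℚ) + j + 2) ≠ 0 := by positivity
    have e6 : ((k:ℚ) + 2 * j + 2) ≠ 0 := by positivity
    have e7 : ((k:ℚ) + 2 * j + 3) ≠ 0 := by positivity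
    have e8 : ((k:ℚ) + 2 * j + 4) ≠ 0 := by positivity
    push_cast
    field_simp
    ring
  · -- k = n, n = m + 1
    obtain ⟨m, rfl⟩ : ∃ m, k = m + 1 := ⟨k - 1, by omega⟩
    unfold Ff GG P0 P1 NN
    rw [cc_succ (m + 1)]
    rw [show 3 * (m + 1) - (m + 1) = 2 * m + 2 by omega,
        show 2 * (m + 1) - (m + 1) = m + 1 by omega,
        show 3 * (m + 1 + 1) - (m + 1) = 2 * m + 5 by omega,
        show 2 * (m + 1 + 1) - (m + 1) = m + 3 by omega,
        show 3 * (m + 1) - (m + 1 + 1) = 2 * m + 1 by omega,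
        show 2 * (m + 1) - (m + 1 + 1) = m by omega,
        show m + 1 - 1 = m by omega]
    rw [Nat.choose_self, Nat.choose_self]
    rw [cast_choose'' (show 2 * m + 2 = (m + 1) + (m + 1) by ring),
        cast_choose'' (show 2 * m + 5 = (m + 1 + 1) + (m + 3) by ring),
        cast_choose'' (show m + 3 = (m + 1 + 1) + 1 by ring),
        cast_choose'' (show 2 * m + 1 = (m + 1) + m by ring),
        cast_choose'' (show m + 1 = m + 1 by ring)]
    have h1 : ((Nat.factorial (2 * m + 2) : ℚ)) =
        (2 * (m:ℚ) + 2) * (Nat.factorial (2 * m + 1)) := by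
      rw [show 2 * m + 2 = (2 * m + 1) + 1 by ring, Nat.factorial_succ]; push_cast; ring
    have h2 : ((Nat.factorial (2 * m + 5) : ℚ)) =
        (2 * (m:ℚ) + 5) * (2 * (m:ℚ) + 4) * (2 * (m:ℚ) + 3) * (2 * (m:ℚ) + 2) *
          (Nat.factorial (2 * m + 1)) := by
      rw [show 2 * m + 5 = (2 * m + 1) + 1 + 1 + 1 + 1 by ring,
        Nat.factorial_succ, Nat.factorial_succ, Nat.factorial_succ, Nat.factorial_succ]
      push_cast; ring
    have h3 : ((Nat.factorial (m + 1) : ℚ)) = ((m:ℚ) + 1) * (Nat.factorial m) := by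
      rw [Nat.factorial_succ]; push_cast; ring
    have h4 : ((Nat.factorial (m + 1 + 1) : ℚ)) =
        ((m:ℚ) + 2) * ((m:ℚ) + 1) * (Nat.factorial m) := by
      rw [Nat.factorial_succ, Nat.factorial_succ]; push_cast; ring
    have h5 : ((Nat.factorial (m + 3) : ℚ)) =
        ((m:ℚ) + 3) * ((m:ℚ) + 2) * ((m:ℚ) + 1) * (Nat.factorial m) := by
      rw [show m + 3 = m + 1 + 1 + 1 by ring, Nat.factorial_succ, Nat.factorial_succ,
        Nat.factorial_succ]
      push_cast; ring
    simp only [h1, h2, h3, h4, h5]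
    have hA : ((Nat.factorial (2 * m + 1) : ℚ)) ≠ 0 :=
      Nat.cast_ne_zero.mpr (Nat.factorial_ne_zero _)
    have hC : ((Nat.factorial m : ℚ)) ≠ 0 := Nat.cast_ne_zero.mpr (Nat.factorial_ne_zero _)
    have e1 : ((m:ℚ) + 1) ≠ 0 := by positivity
    have e2 : ((m:ℚ) + 2) ≠ 0 := by positivity
    have e3 : ((m:ℚ) + 3) ≠ 0 := by positivity
    have e4 : (Nat.factorial 1 : ℚ) ≠ 0 := by norm_num [Nat.factorial]
    push_cast
    field_simp
    ring

set_option maxHeartbeats 2000000 in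
lemma edge (n : ℕ) (hn : 1 ≤ n) :
    GG n (n + 1) = -((n : ℚ) * P1 n * Ff (n + 1) (n + 1)) := by
  obtain ⟨m, rfl⟩ : ∃ m, n = m + 1 := ⟨n - 1, by omega⟩
  unfold Ff GG P1 NN
  rw [show 3 * (m + 1) - (m + 1 + 1) = 2 * m + 1 by omega,
      show 2 * (m + 1) - (m + 1 + 1) = m by omega,
      show m + 1 - 1 = m by omega,
      show 3 * (m + 1 + 1) - (m + 1 + 1) = 2 * m + 4 by omega,
      show 2 * (m + 1 + 1) - (m + 1 + 1) = m + 2 by omega]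
  rw [Nat.choose_self, Nat.choose_self]
  rw [cast_choose'' (show 2 * m + 1 = (m + 1) + m by ring),
      cast_choose'' (show 2 * m + 4 = (m + 1 + 1) + (m + 2) by ring)]
  have h2 : ((Nat.factorial (2 * m + 4) : ℚ)) =
      (2 * (m:ℚ) + 4) * (2 * (m:ℚ) + 3) * (2 * (m:ℚ) + 2) * (Nat.factorial (2 * m + 1)) := by
    rw [show 2 * m + 4 = (2 * m + 1) + 1 + 1 + 1 by ring, Nat.factorial_succ,
      Nat.factorial_succ, Nat.factorial_succ]
    push_cast; ring
  have h3 : ((Nat.factorial (m + 1) : ℚ)) = ((m:ℚ) + 1) * (Nat.factorial m) := by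
    rw [Nat.factorial_succ]; push_cast; ring
  have h4 : ((Nat.factorial (m + 1 + 1) : ℚ)) =
      ((m:ℚ) + 2) * ((m:ℚ) + 1) * (Nat.factorial m) := by
    rw [Nat.factorial_succ, Nat.factorial_succ]; push_cast; ring
  have h5 : ((Nat.factorial (m + 2) : ℚ)) = ((m:ℚ) + 2) * ((m:ℚ) + 1) * (Nat.factorial m) := by
    rw [show m + 2 = m + 1 + 1 by ring, Nat.factorial_succ, Nat.factorial_succ]; push_cast; ring
  simp only [h2, h3, h4, h5]
  have hA : ((Nat.factorial (2 * m + 1) : ℚ)) ≠ 0 :=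
    Nat.cast_ne_zero.mpr (Nat.factorial_ne_zero _)
  have hC : ((Nat.factorial m : ℚ)) ≠ 0 := Nat.cast_ne_zero.mpr (Nat.factorial_ne_zero _)
  have e1 : ((m:ℚ) + 1) ≠ 0 := by positivity
  have e2 : ((m:ℚ) + 2) ≠ 0 := by positivity
  push_cast
  field_simp
  ring

set_option maxHeartbeats 1000000 in
lemma rhs_rec (n : ℕ) : P0 n * Rr n + P1 n * Rr (n + 1) = 0 := by
  unfold P0 P1 Rr
  simp only [ascPochhammer_succ_right, Polynomial.eval_mul, Polynomial.eval_add, Polynomial.eval_X,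
    Polynomial.eval_natCast, Nat.factorial_succ, pow_succ]
  have q1 := poch_pos (2/9) (by norm_num) n
  have q2 := poch_pos (5/9) (by norm_num) n
  have q3 := poch_pos (8/9) (by norm_num) n
  have q4 := poch_pos (1/2) (by norm_num) n
  have q5 := poch_pos (1/3) (by norm_num) n
  have q6 := poch_pos (5/6) (by norm_num) n
  have hf : ((Nat.factorial n : ℚ)) ≠ 0 := Nat.cast_ne_zero.mpr (Nat.factorial_ne_zero _)
  have e1 : ((n:ℚ) + 1) ≠ 0 := by positivity
  have e5 : ((1:ℚ)/3 + n) ≠ 0 := by positivity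
  have e6 : ((5:ℚ)/6 + n) ≠ 0 := by positivity
  push_cast
  field_simp
  ring

lemma key : ∀ n : ℕ, (∑ k ∈ range (n + 1), Ff n k) = Rr n := by
  intro n
  induction n with
  | zero =>
    simp [Ff, cc, Rr, Finset.sum_range_one]
  | succ n ih =>
    rcases n with _ | m
    · -- n = 1 case
      norm_num [Finset.sum_range_succ, Ff, cc, Rr, ascPochhammer_succ_right,
        Nat.factorial]
    · set n := m + 1 with hn
      have hn1 : 1 ≤ n := by omega
      have tele : ∑ k ∈ range (n + 1), (GG n (k + 1) - GG n k) = GG n (n + 1) - GG n 0 :=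
        Finset.sum_range_sub _ _
      have h0 : GG n 0 = 0 := by simp [GG, NN]
      have hsum : ∑ k ∈ range (n + 1), (n : ℚ) * (P0 n * Ff n k + P1 n * Ff (n + 1) k)
          = GG n (n + 1) := by
        rw [Finset.sum_congr rfl (fun k hk => cert n k hn1 (by
          simp only [Finset.mem_range] at hk; omega)), tele, h0, sub_zero]
      have expand : ∑ k ∈ range (n + 1), (n : ℚ) * (P0 n * Ff n k + P1 n * Ff (n + 1) k)
          = (n : ℚ) * P0 n * (∑ k ∈ range (n + 1), Ff n k)
            + (n : ℚ) * P1 n * (∑ k ∈ range (n + 1), Ff (n + 1) k) := by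
        rw [Finset.mul_sum, Finset.mul_sum, ← Finset.sum_add_distrib]
        exact Finset.sum_congr rfl (fun k _ => by ring)
      have hsplit : ∑ k ∈ range (n + 1 + 1), Ff (n + 1) k
          = (∑ k ∈ range (n + 1), Ff (n + 1) k) + Ff (n + 1) (n + 1) :=
        Finset.sum_range_succ _ _
      have hP1 : P1 n ≠ 0 := by
        have : (0:ℚ) < 3 * (3 * (n:ℚ) + 1) * (6 * n + 5) * ((n:ℚ) + 1) ^ 2 := by positivity
        unfold P1; intro h; rw [show (-3 : ℚ) * (3 * (n:ℚ) + 1) * (6 * (n:ℚ) + 5) * ((n:ℚ) + 1) ^ 2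
          = -(3 * (3 * (n:ℚ) + 1) * (6 * (n:ℚ) + 5) * ((n:ℚ) + 1) ^ 2) by ring] at h
        linarith
      have hnne : (n : ℚ) ≠ 0 := Nat.cast_ne_zero.mpr (by omega)
      have main : P0 n * (∑ k ∈ range (n + 1), Ff n k)
          + P1 n * (∑ k ∈ range (n + 1 + 1), Ff (n + 1) k) = 0 := by
        have := edge n hn1
        have h2 : (n : ℚ) * (P0 n * (∑ k ∈ range (n + 1), Ff n k)
            + P1 n * (∑ k ∈ range (n + 1 + 1), Ff (n + 1) k)) = 0 := by
          rw [hsplit]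
          have := hsum
          rw [expand] at this
          rw [edge n hn1] at this
          linear_combination this
        exact (mul_eq_zero.mp h2).resolve_left hnne
      rw [ih] at main
      have hr := rhs_rec n
      have : P1 n * ((∑ k ∈ range (n + 1 + 1), Ff (n + 1) k) - Rr (n + 1)) = 0 := by
        linear_combination main - hr
      have := (mul_eq_zero.mp this).resolve_left hP1
      linarith [sub_eq_zero.mp this]

/-- The diagonal of `(1-x)^{1/3}/(1-x-y-z)` equals
`₄F₃([2/9, 5/9, 8/9, 1/2], [1/3, 5/6, 1], 27x)`, stated coefficient-wise. -/
theorem diagonal_1_x_pow_one_third (n : ℕ) :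
    ∑ k ∈ range (n + 1),
        ((ascPochhammer ℚ k).eval (-(1 / 3)) / (Nat.factorial k : ℚ)) *
          (Nat.choose (3 * n - k) n : ℚ) * (Nat.choose (2 * n - k) n : ℚ) =
    27 ^ n * (ascPochhammer ℚ n).eval (2 / 9) * (ascPochhammer ℚ n).eval (5 / 9) *
        (ascPochhammer ℚ n).eval (8 / 9) * (ascPochhammer ℚ n).eval (1 / 2) /
      ((ascPochhammer ℚ n).eval (1 / 3) * (ascPochhammer ℚ n).eval (5 / 6) *
        (Nat.factorial n : ℚ) ^ 2) := by
  have := key n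
  simp only [Ff, cc, Rr] at this
  exact this
end

section
/- For every n ∈ ℕ, (Σ_{j=0}^{n} Σ_{k=0}^{2n} ((−2/3)_k / k!) · C(k,j) · C(3n−k, 2n−k) · C(2n−k, n−j)) · ((5/9)_n / n!) = 27^n · (1/9)_n (4/9)_n (5/9)_n (7/9)_n / ((1/3)_n · (n!)³). (This expresses, in coefficient form, that the diagonal of the four-variable algebraic function ((1−x−y)^{2/3}/(1−x−y−z)) · (1−w)^{−5/9} equals ₄F₃([1/9, 4/9, 5/9, 7/9], [1/3, 1, 1], 27x).) -/
/-!
Summing over `j` first, Vandermonde's identity collapses the double sum to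
`C(2n, n) · ∑ₖ (-2/3)ₖ/k! · C(3n-k, 2n-k)`. Writing `C(n + i, i) = (n+1)ᵢ/i!`, the remaining
sum is a Chu–Vandermonde convolution and equals `(n+1/3)_{2n}/(2n)!`. Finally
`(1/3)ₙ (n+1/3)_{2n} = (1/3)_{3n}`, and Gauss's multiplication formula
`(3a)_{3n} = 27ⁿ (a)ₙ (a+1/3)ₙ (a+2/3)ₙ` at `a = 1/9` produces the right-hand side.
-/

open Finset Polynomial

theorem ascPochhammer_eval_add_s13 {R : Type*} [CommRing R] (a b : R) (m : ℕ) :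
    (ascPochhammer R m).eval (a + b) = ∑ ij ∈ antidiagonal m,
      m.choose ij.1 * ((ascPochhammer R ij.1).eval a * (ascPochhammer R ij.2).eval b) := by
  have neg_desc : ∀ (x : R) k, (ascPochhammer R k).eval x =
      ((Int.negOnePow k : ℤ) : R) * (descPochhammer ℤ k).smeval (-x) := by
    intro x k
    rw [← ascPochhammer_smeval_eq_eval, ← neg_neg x, ascPochhammer_smeval_neg_eq_descPochhammer,
      neg_neg, Units.smul_def, zsmul_eq_mul]
  rw [neg_desc, neg_add, Ring.descPochhammer_smeval_add _ (Commute.all _ _), mul_sum]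
  refine sum_congr rfl fun ij hij => ?_
  rw [← mem_antidiagonal.mp hij, neg_desc a, neg_desc b, Nat.cast_add, Int.negOnePow_add]
  push_cast
  ring

theorem ascPochhammer_eval_eq_prod_range {S : Type*} [CommSemiring S] (n : ℕ) (r : S) :
    (ascPochhammer S n).eval r = ∏ i ∈ range n, (r + i) := by
  induction n with
  | zero => simp
  | succ n ih => rw [ascPochhammer_succ_eval, ih, prod_range_succ]

theorem ascPochhammer_eval_mul_eval_add {S : Type*} [CommSemiring S] (a : S) (n m : ℕ) :
    (ascPochhammer S n).eval a * (ascPochhammer S m).eval (a + n) =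
      (ascPochhammer S (n + m)).eval a := by
  rw [← ascPochhammer_mul, eval_mul, eval_comp, eval_add, eval_X, eval_natCast]

theorem ascPochhammer_eval_mul_mul {K : Type*} [Field K] (m : ℕ) [NeZero (m : K)] (a : K)
    (n : ℕ) :
    (ascPochhammer K (m * n)).eval (m * a) =
      m ^ (m * n) * ∏ i ∈ range m, (ascPochhammer K n).eval (a + i / m) := by
  induction n with
  | zero => simp
  | succ n ih =>
    have hm : (m : K) ≠ 0 := NeZero.ne _
    have last_block : ∏ i ∈ range m, (m * a + ↑(m * n) + i) =
        m ^ m * ∏ i ∈ range m, (a + i / m + n) := by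
      rw [← card_range m, ← prod_const, card_range, ← prod_mul_distrib]
      refine prod_congr rfl fun i _ => ?_
      push_cast
      field_simp
      ring
    rw [mul_add, mul_one, ← ascPochhammer_eval_mul_eval_add, ih, ascPochhammer_eval_eq_prod_range,
      last_block]
    simp only [ascPochhammer_succ_eval, prod_mul_distrib]
    ring

section Field

variable {K : Type*} [Field K] [CharZero K]

theorem ascPochhammer_eval_add_div_factorial (a b : K) (m : ℕ) :
    (ascPochhammer K m).eval (a + b) / m.factorial = ∑ ij ∈ antidiagonal m,
      (ascPochhammer K ij.1).eval a / ij.1.factorial *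
        ((ascPochhammer K ij.2).eval b / ij.2.factorial) := by
  rw [ascPochhammer_eval_add_s13, sum_div]
  refine sum_congr rfl fun ij hij => ?_
  have := (Nat.cast_ne_zero (R := K)).2 (ij.1 + ij.2).factorial_ne_zero
  rw [← mem_antidiagonal.mp hij, Nat.cast_add_choose]
  field_simp

theorem Nat.cast_add_choose_right_eq_ascPochhammer_div (a j : ℕ) :
    ((a + j).choose j : K) = (ascPochhammer K j).eval ((a : K) + 1) / j.factorial := by
  have := (Nat.cast_ne_zero (R := K)).2 a.factorial_ne_zero
  rw [Nat.add_comm, Nat.cast_add_choose, Nat.add_comm j a, ← factorial_mul_ascPochhammer K a j]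
  field_simp

theorem sum_ascPochhammer_div_factorial_mul_choose (a : K) (n m : ℕ) :
    ∑ k ∈ range (m + 1), (ascPochhammer K k).eval a / k.factorial *
        ((n + m - k).choose (m - k) : K) =
      (ascPochhammer K m).eval (a + (n + 1)) / m.factorial := by
  rw [ascPochhammer_eval_add_div_factorial, Nat.sum_antidiagonal_eq_sum_range_succ_mk]
  refine sum_congr rfl fun k hk => ?_
  rw [show n + m - k = n + (m - k) by have := mem_range.mp hk; omega,
    Nat.cast_add_choose_right_eq_ascPochhammer_div]

end Field

theorem Nat.sum_range_choose_mul_choose_sub {k m : ℕ} (hk : k ≤ m) (n : ℕ) :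
    ∑ j ∈ range (n + 1), k.choose j * (m - k).choose (n - j) = m.choose n := by
  have := Nat.add_choose_eq k (m - k) n
  rwa [Nat.add_sub_cancel' hk, Nat.sum_antidiagonal_eq_sum_range_succ_mk, eq_comm] at this

/-- The diagonal of the four-variable algebraic function
`((1-x-y)^{2/3}/(1-x-y-z)) · (1-w)^{-5/9}` equals
`₄F₃([1/9, 4/9, 5/9, 7/9], [1/3, 1, 1], 27x)`, stated coefficient-wise. -/
theorem diagonal_four_variable_4F3 (n : ℕ) :
    (∑ j ∈ range (n + 1), ∑ k ∈ range (2 * n + 1),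
        ((ascPochhammer ℚ k).eval (-(2 / 3)) / (Nat.factorial k : ℚ)) *
          (Nat.choose k j : ℚ) * (Nat.choose (3 * n - k) (2 * n - k) : ℚ) *
          (Nat.choose (2 * n - k) (n - j) : ℚ)) *
      ((ascPochhammer ℚ n).eval (5 / 9) / (Nat.factorial n : ℚ)) =
    27 ^ n * (ascPochhammer ℚ n).eval (1 / 9) * (ascPochhammer ℚ n).eval (4 / 9) *
        (ascPochhammer ℚ n).eval (5 / 9) * (ascPochhammer ℚ n).eval (7 / 9) /
      ((ascPochhammer ℚ n).eval (1 / 3) * (Nat.factorial n : ℚ) ^ 3) := by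
  have inner_sums : (∑ j ∈ range (n + 1), ∑ k ∈ range (2 * n + 1),
        ((ascPochhammer ℚ k).eval (-(2 / 3)) / (Nat.factorial k : ℚ)) *
          (Nat.choose k j : ℚ) * (Nat.choose (3 * n - k) (2 * n - k) : ℚ) *
          (Nat.choose (2 * n - k) (n - j) : ℚ)) =
      ((2 * n).choose n : ℚ) *
        ((ascPochhammer ℚ (2 * n)).eval (1 / 3 + n : ℚ) / (2 * n).factorial) := by
    rw [show (1 / 3 + n : ℚ) = -(2 / 3) + (n + 1) by ring,
      ← sum_ascPochhammer_div_factorial_mul_choose, show n + 2 * n = 3 * n by ring, sum_comm,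
      mul_sum]
    refine sum_congr rfl fun k hk => ?_
    rw [← Nat.sum_range_choose_mul_choose_sub (Nat.le_of_lt_succ (mem_range.mp hk)) n]
    push_cast [mul_sum, sum_mul]
    exact sum_congr rfl fun j _ => by ring
  have triplication :
      (ascPochhammer ℚ n).eval (1 / 3) * (ascPochhammer ℚ (2 * n)).eval (1 / 3 + n : ℚ) =
        27 ^ n * (ascPochhammer ℚ n).eval (1 / 9) * (ascPochhammer ℚ n).eval (4 / 9) *
          (ascPochhammer ℚ n).eval (7 / 9) := by
    have gauss := ascPochhammer_eval_mul_mul 3 (1 / 9 : ℚ) n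
    norm_num [prod_range_succ, pow_mul] at gauss
    rw [ascPochhammer_eval_mul_eval_add, show n + 2 * n = 3 * n by ring, gauss]
    ring
  have central_binomial :
      ((2 * n).choose n : ℚ) = (2 * n).factorial / (n.factorial * n.factorial) := by
    rw [Nat.cast_choose ℚ (by omega : n ≤ 2 * n), show 2 * n - n = n by omega]
  have h_one_third : (ascPochhammer ℚ n).eval (1 / 3) ≠ 0 :=
    (ascPochhammer_pos n _ (by norm_num)).ne'
  rw [inner_sums, central_binomial]
  generalize (ascPochhammer ℚ (2 * n)).eval (1 / 3 + n : ℚ) = P at triplication ⊢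
  field_simp
  linear_combination (ascPochhammer ℚ n).eval (5 / 9) * triplication
end

section
/- For every n ∈ ℕ, the rational number 729^n · (2/9)_n (5/9)_n (8/9)_n / ((2/3)_n · (n!)²) is an integer. (Equivalently, the hypergeometric series ₃F₂([2/9, 5/9, 8/9], [2/3, 1], 3⁶·x) has integer Taylor coefficients: 1 + 120x + 47124x² + 23483460x³ + ⋯.) -/
/-!
After scaling by `9ⁿ`, the symbols `(2/9)ₙ (5/9)ₙ (8/9)ₙ` become the products of `9k+2`, `9k+5`,
`9k+8` over `k < n`, which interleave into `∏_{j<3n} (3j+2)`; likewise `3ⁿ (2/3)ₙ = ∏_{j<n} (3j+2)`.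
So the coefficient is `3ⁿ ∏_{n ≤ j < 3n} (3j+2) / (n!)²`, and as `(n!)² ∣ (2n)!` it suffices that
`(2n)!` divides the numerator, prime by prime. For `p = 3`, Legendre's formula gives
`v₃((2n)!) ≤ n`. For `p ≠ 3`, every `pⁱ` consecutive terms of the progression `3j+2` contain a
multiple of `pⁱ`, so the `2n` terms contain at least `⌊2n/pⁱ⌋` of them; summing over `i` dominates
Legendre's formula for `v_p((2n)!)`.
-/

open Finset Nat

theorem exists_mem_Ico_dvd_mul_add {m d : ℕ} [NeZero m] (hd : d.Coprime m) (c b : ℕ) :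
    ∃ k ∈ Ico b (b + m), m ∣ d * k + c := by
  set x : ZMod m := -c * (d : ZMod m)⁻¹ - b
  refine ⟨b + x.val, by simp [x.val_lt], ?_⟩
  rw [← ZMod.natCast_eq_zero_iff]
  push_cast
  rw [ZMod.natCast_zmod_val]
  linear_combination (-(c : ZMod m)) * ZMod.coe_mul_inv_eq_one d hd

theorem le_card_filter_Ico_mul {P : ℕ → Prop} [DecidablePred P] {m : ℕ}
    (hP : ∀ b, ∃ k ∈ Ico b (b + m), P k) (a q : ℕ) :
    q ≤ #{k ∈ Ico a (a + q * m) | P k} := by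
  induction q with
  | zero => simp
  | succ q ih =>
    obtain ⟨k, hk, hPk⟩ := hP (a + q * m)
    have hblock : 0 < #{k ∈ Ico (a + q * m) (a + q * m + m) | P k} :=
      card_pos.mpr ⟨k, mem_filter.mpr ⟨hk, hPk⟩⟩
    rw [add_mul, one_mul, ← add_assoc, ← Ico_union_Ico_eq_Ico (le_add_right le_rfl)
      (le_add_right le_rfl), filter_union, card_union_of_disjoint
      (disjoint_filter_filter (Ico_disjoint_Ico_consecutive _ _ _))]
    omega

theorem div_le_card_filter_Ico_dvd_mul_add {m d : ℕ} (hm : 0 < m) (hd : d.Coprime m)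
    (c a L : ℕ) : L / m ≤ #{k ∈ Ico a (a + L) | m ∣ d * k + c} := by
  have : NeZero m := ⟨hm.ne'⟩
  refine (le_card_filter_Ico_mul (exists_mem_Ico_dvd_mul_add hd c) a (L / m)).trans ?_
  exact card_le_card (filter_subset_filter _ (Ico_subset_Ico_right
    (Nat.add_le_add_left (div_mul_le_self L m) a)))

theorem factorization_factorial_le_factorization_prod {p d c : ℕ} (hp : p.Prime)
    (hpd : ¬p ∣ d) (hc : 0 < c) (a L : ℕ) :
    (L)!.factorization p ≤ (∏ k ∈ Ico a (a + L), (d * k + c)).factorization p := by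
  set b := d * (a + L) + c + L
  have hterm : ∀ k ∈ Ico a (a + L), 0 < d * k + c ∧ d * k + c < p ^ b := fun k hk => by
    have : d * k ≤ d * (a + L) := Nat.mul_le_mul_left d (mem_Ico.mp hk).2.le
    exact ⟨by omega, (Nat.lt_pow_self hp.one_lt).trans_le' (by omega)⟩
  have hcop : ∀ i, d.Coprime (p ^ i) := fun i =>
    ((hp.coprime_iff_not_dvd.mpr hpd).symm).pow_right i
  calc (L)!.factorization p = ∑ i ∈ Ico 1 b, L / p ^ i :=
        factorization_factorial hp ((log_le_self p L).trans_lt (by omega))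
    _ ≤ ∑ i ∈ Ico 1 b, #{k ∈ Ico a (a + L) | p ^ i ∣ d * k + c} :=
        sum_le_sum fun i _ => div_le_card_filter_Ico_dvd_mul_add (pow_pos hp.pos i) (hcop i) c a L
    _ = ∑ k ∈ Ico a (a + L), #{i ∈ Ico 1 b | p ^ i ∣ d * k + c} := by
        simp only [card_filter]
        exact sum_comm
    _ = (∏ k ∈ Ico a (a + L), (d * k + c)).factorization p := by
        rw [factorization_prod fun k hk => (hterm k hk).1.ne', Finsupp.finsetSum_apply]
        exact sum_congr rfl fun k hk =>
          (factorization_eq_card_pow_dvd_of_lt hp (hterm k hk).1 (hterm k hk).2).symm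

theorem factorial_two_mul_dvd_three_pow_mul_prod (n : ℕ) :
    (2 * n)! ∣ 3 ^ n * ∏ k ∈ Ico n (3 * n), (3 * k + 2) := by
  have hprod : ∏ k ∈ Ico n (3 * n), (3 * k + 2) ≠ 0 := prod_ne_zero_iff.mpr fun _ _ => by omega
  rw [← factorization_le_iff_dvd (factorial_ne_zero _) (by positivity)]
  intro p
  by_cases hp : p.Prime
  swap
  · simp [factorization_eq_zero_of_not_prime _ hp]
  rw [Nat.factorization_mul (by positivity) hprod, Finsupp.add_apply, factorization_pow,
    Finsupp.smul_apply, smul_eq_mul]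
  by_cases hp3 : p = 3
  · subst hp3
    have hlegendre := factorization_factorial_le_div_pred hp (2 * n)
    rw [prime_three.factorization_self]
    omega
  · have hpd : ¬p ∣ 3 := fun h => hp3 ((prime_dvd_prime_iff_eq hp prime_three).mp h)
    have hcount := factorization_factorial_le_factorization_prod hp hpd two_pos n (2 * n)
    rw [show n + 2 * n = 3 * n by ring] at hcount
    omega

theorem pow_mul_ascPochhammer_eval_div {K : Type*} [Field K] {c : K} (hc : c ≠ 0) (a : K)
    (n : ℕ) : c ^ n * (ascPochhammer K n).eval (a / c) = ∏ k ∈ range n, (c * k + a) := by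
  induction n with
  | zero => simp
  | succ n ih =>
    rw [ascPochhammer_succ_eval, prod_range_succ, ← ih]
    field_simp
    ring

theorem prod_range_mul_eq_prod_prod {M : Type*} [CommMonoid M] (f : ℕ → M) (m n : ℕ) :
    ∏ j ∈ range (m * n), f j = ∏ k ∈ range n, ∏ i ∈ range m, f (m * k + i) := by
  induction n with
  | zero => simp
  | succ n ih => rw [mul_add_one, prod_range_add, ih, prod_range_succ]

theorem ascPochhammer_ninths_eq (n : ℕ) :
    729 ^ n * (ascPochhammer ℚ n).eval (2 / 9) * (ascPochhammer ℚ n).eval (5 / 9) *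
        (ascPochhammer ℚ n).eval (8 / 9) =
      (ascPochhammer ℚ n).eval (2 / 3) * (3 ^ n * ∏ k ∈ Ico n (3 * n), (3 * k + 2 : ℚ)) := by
  calc 729 ^ n * (ascPochhammer ℚ n).eval (2 / 9) * (ascPochhammer ℚ n).eval (5 / 9) *
        (ascPochhammer ℚ n).eval (8 / 9)
      = (9 ^ n * (ascPochhammer ℚ n).eval (2 / 9)) * (9 ^ n * (ascPochhammer ℚ n).eval (5 / 9)) *
          (9 ^ n * (ascPochhammer ℚ n).eval (8 / 9)) := by
        rw [show (729 : ℚ) = 9 * 9 * 9 by norm_num, mul_pow, mul_pow]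
        ring
    _ = ∏ k ∈ range n, ((9 * (k : ℚ) + 2) * (9 * k + 5) * (9 * k + 8)) := by
        simp only [pow_mul_ascPochhammer_eval_div (by norm_num : (9 : ℚ) ≠ 0), prod_mul_distrib]
    _ = ∏ j ∈ range (3 * n), (3 * j + 2 : ℚ) := by
        rw [prod_range_mul_eq_prod_prod]
        refine prod_congr rfl fun k _ => ?_
        simp only [prod_range_succ, prod_range_zero]
        push_cast
        ring
    _ = (3 ^ n * (ascPochhammer ℚ n).eval (2 / 3)) * ∏ k ∈ Ico n (3 * n), (3 * k + 2 : ℚ) := by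
        rw [pow_mul_ascPochhammer_eval_div (by norm_num : (3 : ℚ) ≠ 0),
          prod_range_mul_prod_Ico _ (by omega)]
    _ = _ := by ring

/-- The hypergeometric series `₃F₂([2/9, 5/9, 8/9], [2/3, 1], 3⁶·x)` has integer
Taylor coefficients: for every `n`, `729^n (2/9)_n (5/9)_n (8/9)_n / ((2/3)_n (n!)²)`
is an integer. -/
theorem hypergeom_2_9_5_9_8_9_integer_coeffs (n : ℕ) :
    ∃ m : ℤ,
      729 ^ n * (ascPochhammer ℚ n).eval (2 / 9) * (ascPochhammer ℚ n).eval (5 / 9) *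
          (ascPochhammer ℚ n).eval (8 / 9) /
        ((ascPochhammer ℚ n).eval (2 / 3) * (Nat.factorial n : ℚ) ^ 2) = (m : ℚ) := by
  set N := 3 ^ n * ∏ k ∈ Ico n (3 * n), (3 * k + 2)
  have hdvd : n ! ^ 2 ∣ N := by
    rw [sq]
    refine (factorial_mul_factorial_dvd_factorial_add n n).trans ?_
    rw [← two_mul]
    exact factorial_two_mul_dvd_three_pow_mul_prod n
  have hpoch : (ascPochhammer ℚ n).eval (2 / 3) ≠ 0 := (ascPochhammer_pos n _ (by norm_num)).ne'
  refine ⟨(N / n ! ^ 2 : ℕ), ?_⟩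
  rw [ascPochhammer_ninths_eq, mul_div_mul_left _ _ hpoch, Int.cast_natCast,
    Nat.cast_div hdvd (by positivity)]
  push_cast [N]
  rfl
end

section
/- For every n ∈ ℕ, the rational number 729^n · (1/9)_n (4/9)_n (7/9)_n / ((1/3)_n · (n!)²) is an integer. (Equivalently, the hypergeometric series ₃F₂([1/9, 4/9, 7/9], [1/3, 1], 3⁶·x) has integer Taylor coefficients: 1 + 84x + 32760x² + 16302000x³ + ⋯.) -/
open Finset

private lemma hyp_exists_sol (q a : ℕ) (hq : 0 < q) (h3 : Nat.Coprime 3 q) :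
    ∃ m, a ≤ m ∧ m < a + q ∧ q ∣ 3 * m + 1 := by
  haveI : NeZero q := ⟨hq.ne'⟩
  have hu : IsUnit ((3 : ℕ) : ZMod q) := (ZMod.isUnit_iff_coprime 3 q).mpr h3
  obtain ⟨s, hs⟩ : ∃ s : ZMod q, ((3 : ℕ) : ZMod q) * s = -(3 * (a : ZMod q) + 1) :=
    ⟨hu.unit⁻¹ * (-(3 * (a : ZMod q) + 1)), by
      rw [← mul_assoc, IsUnit.mul_val_inv]
      ring⟩
  refine ⟨a + s.val, Nat.le_add_right a _, by have := ZMod.val_lt s; omega, ?_⟩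
  have h0 : ((3 * (a + s.val) + 1 : ℕ) : ZMod q) = 0 := by
    push_cast [ZMod.natCast_val, ZMod.cast_id]
    push_cast at hs
    linear_combination hs
  exact (ZMod.natCast_eq_zero_iff _ _).mp h0

private lemma hyp_count_ge (q n : ℕ) (hq : 0 < q) (h3 : Nat.Coprime 3 q) :
    2 * (n / q) ≤ #{m ∈ Ico n (3 * n) | q ∣ 3 * m + 1} := by
  obtain ⟨m0, hm0a, hm0b, hm0d⟩ := hyp_exists_sol q n hq h3
  have hmem : ∀ j ∈ range (2 * (n / q)), m0 + j * q ∈ {m ∈ Ico n (3 * n) | q ∣ 3 * m + 1} := by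
    intro j hj
    rw [mem_range] at hj
    have h1' : j * q + q ≤ 2 * n := by
      calc j * q + q = (j + 1) * q := by ring
        _ ≤ 2 * (n / q) * q := Nat.mul_le_mul_right q (by omega)
        _ = 2 * (n / q * q) := by ring
        _ ≤ 2 * n := by have := Nat.div_mul_le_self n q; omega
    simp only [mem_filter, mem_Ico]
    refine ⟨⟨by omega, by omega⟩, ?_⟩
    have he : 3 * (m0 + j * q) + 1 = (3 * m0 + 1) + q * (3 * j) := by ring
    rw [he]
    exact dvd_add hm0d (dvd_mul_right q (3 * j))
  calc 2 * (n / q) = #(range (2 * (n / q))) := (card_range _).symm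
    _ ≤ _ := Finset.card_le_card_of_injOn _ hmem (by
        intro a _ b _ hab
        simp only at hab
        have : a * q = b * q := by omega
        exact Nat.eq_of_mul_eq_mul_right hq this)

/-- Key divisibility: `(n!)² ∣ 3^n * ∏_{m=n}^{3n-1} (3m+1)`. -/
private lemma hyp_key_dvd (n : ℕ) :
    (Nat.factorial n) ^ 2 ∣ 3 ^ n * ∏ m ∈ Ico n (3 * n), (3 * m + 1) := by
  have hPpos : 0 < ∏ m ∈ Ico n (3 * n), (3 * m + 1) :=
    Finset.prod_pos fun m _ => by omega
  have hne1 : (Nat.factorial n) ^ 2 ≠ 0 := pow_ne_zero _ n.factorial_ne_zero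
  have hne2 : 3 ^ n * ∏ m ∈ Ico n (3 * n), (3 * m + 1) ≠ 0 := by positivity
  rw [← Nat.factorization_le_iff_dvd hne1 hne2]
  rw [Finsupp.le_def]
  intro p
  by_cases hp : p.Prime
  swap
  · simp [Nat.factorization_eq_zero_of_not_prime _ hp]
  haveI : Fact p.Prime := ⟨hp⟩
  rw [Nat.factorization_pow]
  simp only [Finsupp.smul_apply, smul_eq_mul]
  by_cases hp3 : p = 3
  · -- p = 3 : 2 * v₃(n!) ≤ n
    subst hp3
    have hd : (2 : ℕ) * padicValNat 3 (Nat.factorial n) ≤ n := by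
      have := sub_one_mul_padicValNat_factorial (p := 3) n
      omega
    have h3n : n ≤ (3 ^ n * ∏ m ∈ Ico n (3 * n), (3 * m + 1)).factorization 3 := by
      have hdvd : (3 : ℕ) ^ n ∣ 3 ^ n * ∏ m ∈ Ico n (3 * n), (3 * m + 1) := dvd_mul_right _ _
      exact (Nat.Prime.pow_dvd_iff_le_factorization (by norm_num) hne2).mp hdvd
    calc 2 * (Nat.factorial n).factorization 3
        = 2 * padicValNat 3 (Nat.factorial n) := by
          rw [Nat.factorization_def _ (by norm_num)]
      _ ≤ n := hd
      _ ≤ _ := h3n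
  · -- p ≠ 3
    have hcop : Nat.Coprime 3 p := (Nat.coprime_primes (by norm_num) hp).mpr fun h => hp3 h.symm
    have hlog : Nat.log p n < n + 1 := Nat.lt_succ_of_le (Nat.log_le_self p n)
    have hleg : (Nat.factorial n).factorization p = ∑ i ∈ Ico 1 (n + 1), n / p ^ i := by
      rw [Nat.factorization_def _ hp]
      exact padicValNat_factorial hlog
    have step1 : ∑ i ∈ Ico 1 (n + 1), 2 * (n / p ^ i)
        ≤ ∑ i ∈ Ico 1 (n + 1), #{m ∈ Ico n (3 * n) | p ^ i ∣ 3 * m + 1} := by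
      refine Finset.sum_le_sum fun i hi => ?_
      exact hyp_count_ge (p ^ i) n (pow_pos hp.pos i) (hcop.pow_right i)
    have step2 : ∑ i ∈ Ico 1 (n + 1), #{m ∈ Ico n (3 * n) | p ^ i ∣ 3 * m + 1}
        = ∑ m ∈ Ico n (3 * n), #{i ∈ Ico 1 (n + 1) | p ^ i ∣ 3 * m + 1} := by
      simp only [Finset.card_filter]
      exact Finset.sum_comm
    have step3 : ∀ m ∈ Ico n (3 * n),
        #{i ∈ Ico 1 (n + 1) | p ^ i ∣ 3 * m + 1} ≤ (3 * m + 1).factorization p := by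
      intro m _
      have hsub : {i ∈ Ico 1 (n + 1) | p ^ i ∣ 3 * m + 1}
          ⊆ Icc 1 ((3 * m + 1).factorization p) := by
        intro i hi
        simp only [mem_filter, mem_Ico] at hi
        rw [mem_Icc]
        exact ⟨hi.1.1, (Nat.Prime.pow_dvd_iff_le_factorization hp (by omega)).mp hi.2⟩
      calc _ ≤ #(Icc 1 ((3 * m + 1).factorization p)) := Finset.card_le_card hsub
        _ = (3 * m + 1).factorization p := by rw [Nat.card_Icc]; omega
    have step4 : (∏ m ∈ Ico n (3 * n), (3 * m + 1)).factorization p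
        = ∑ m ∈ Ico n (3 * n), (3 * m + 1).factorization p := by
      rw [Nat.factorization_prod fun m _ => by omega]
      simp
    have hPdvd : (∏ m ∈ Ico n (3 * n), (3 * m + 1)).factorization p
        ≤ (3 ^ n * ∏ m ∈ Ico n (3 * n), (3 * m + 1)).factorization p := by
      have := (Nat.factorization_le_iff_dvd hPpos.ne' hne2).mpr (dvd_mul_left _ _)
      exact Finsupp.le_def.mp this p
    calc 2 * (Nat.factorial n).factorization p
        = ∑ i ∈ Ico 1 (n + 1), 2 * (n / p ^ i) := by rw [hleg, Finset.mul_sum]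
      _ ≤ ∑ i ∈ Ico 1 (n + 1), #{m ∈ Ico n (3 * n) | p ^ i ∣ 3 * m + 1} := step1
      _ = ∑ m ∈ Ico n (3 * n), #{i ∈ Ico 1 (n + 1) | p ^ i ∣ 3 * m + 1} := step2
      _ ≤ ∑ m ∈ Ico n (3 * n), (3 * m + 1).factorization p := Finset.sum_le_sum step3
      _ = (∏ m ∈ Ico n (3 * n), (3 * m + 1)).factorization p := step4.symm
      _ ≤ _ := hPdvd

private lemma hyp_poch_third (n : ℕ) :
    (3 : ℚ) ^ n * (ascPochhammer ℚ n).eval (1 / 3) = ∏ k ∈ range n, (3 * (k : ℚ) + 1) := by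
  induction n with
  | zero => simp
  | succ n ih =>
    rw [pow_succ, ascPochhammer_succ_eval, prod_range_succ]
    linear_combination (3 * (1 / 3 + (n : ℚ))) * ih

private lemma hyp_poch_ninths (n : ℕ) :
    (729 : ℚ) ^ n * (ascPochhammer ℚ n).eval (1 / 9) * (ascPochhammer ℚ n).eval (4 / 9) *
      (ascPochhammer ℚ n).eval (7 / 9) = ∏ m ∈ range (3 * n), (3 * (m : ℚ) + 1) := by
  induction n with
  | zero => simp
  | succ n ih =>
    have h3 : 3 * (n + 1) = (3 * n + 1) + 1 + 1 := by ring
    rw [h3, prod_range_succ, prod_range_succ, prod_range_succ, pow_succ,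
      ascPochhammer_succ_eval, ascPochhammer_succ_eval, ascPochhammer_succ_eval]
    push_cast
    linear_combination (729 * (1 / 9 + (n : ℚ)) * (4 / 9 + (n : ℚ)) * (7 / 9 + (n : ℚ))) * ih

/-- The hypergeometric series `₃F₂([1/9, 4/9, 7/9], [1/3, 1], 3⁶·x)` has integer
Taylor coefficients: for every `n`, `729^n (1/9)_n (4/9)_n (7/9)_n / ((1/3)_n (n!)²)`
is an integer. -/
theorem hypergeom_1_9_4_9_7_9_integer_coeffs (n : ℕ) :
    ∃ m : ℤ,
      729 ^ n * (ascPochhammer ℚ n).eval (1 / 9) * (ascPochhammer ℚ n).eval (4 / 9) *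
          (ascPochhammer ℚ n).eval (7 / 9) /
        ((ascPochhammer ℚ n).eval (1 / 3) * (Nat.factorial n : ℚ) ^ 2) = (m : ℚ) := by
  obtain ⟨c, hc⟩ := hyp_key_dvd n
  refine ⟨(c : ℤ), ?_⟩
  have key2 : (3 : ℚ) ^ n * ∏ m ∈ Ico n (3 * n), (3 * (m : ℚ) + 1)
      = (c : ℚ) * ((Nat.factorial n : ℚ)) ^ 2 := by
    have := congrArg (Nat.cast : ℕ → ℚ) hc
    push_cast at this
    linear_combination this
  set E13 := (ascPochhammer ℚ n).eval (1 / 3) with hE13def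
  set A1 := ∏ k ∈ range n, (3 * (k : ℚ) + 1) with hA1def
  set PI := ∏ m ∈ Ico n (3 * n), (3 * (m : ℚ) + 1) with hPIdef
  have hA : (3 : ℚ) ^ n * E13 = A1 := hyp_poch_third n
  have hA1ne : A1 ≠ 0 := by
    rw [hA1def]
    exact (Finset.prod_pos fun k _ => by positivity).ne'
  have hE13ne : E13 ≠ 0 := by
    intro h
    rw [h, mul_zero] at hA
    exact hA1ne hA.symm
  have hsplit : (729 : ℚ) ^ n * (ascPochhammer ℚ n).eval (1 / 9) *
      (ascPochhammer ℚ n).eval (4 / 9) * (ascPochhammer ℚ n).eval (7 / 9) = A1 * PI := by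
    rw [hyp_poch_ninths n, hA1def, hPIdef]
    exact (Finset.prod_range_mul_prod_Ico _ (by omega)).symm
  rw [hsplit, div_eq_iff (by
    have : (Nat.factorial n : ℚ) ≠ 0 := Nat.cast_ne_zero.mpr n.factorial_ne_zero
    positivity)]
  push_cast
  linear_combination E13 * key2 - PI * hA
end

section
/- For every n ∈ ℕ, the rational number 1728^n · (3/4)_n (5/12)_n (1/12)_n / ((1/4)_n · (n!)²) is an integer. (Equivalently, the hypergeometric series ₃F₂([3/4, 5/12, 1/12], [1/4, 1], 1728·x) has integer Taylor coefficients.) -/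
open Finset

/-- The product `∏_{k=n}^{3n-1} (4k+1)`. -/
private def Pprod (n : ℕ) : ℕ := ∏ k ∈ Finset.Ico n (3 * n), (4 * k + 1)

private lemma Pprod_pos (n : ℕ) : 0 < Pprod n :=
  Finset.prod_pos fun k _ => by positivity

/-- In any window `[n, 3n)` there are at least `2n/q` values of `k` with `q ∣ 4k+1`,
for odd `q`. -/
private lemma count_ap {q : ℕ} (hq : Odd q) (n : ℕ) :
    2 * n / q ≤ #{k ∈ Finset.Ico n (3 * n) | q ∣ 4 * k + 1} := by
  have hq0 : 0 < q := hq.pos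
  obtain ⟨r, hrq, hr⟩ : ∃ r, r < q ∧ q ∣ 4 * r + 1 := by
    have h2 : q % 2 = 1 := Nat.odd_iff.mp hq
    have h4 : q % 4 = 1 ∨ q % 4 = 3 := by omega
    rcases h4 with h | h
    · exact ⟨q / 4, by omega, ⟨1, by omega⟩⟩
    · exact ⟨3 * q / 4, by omega, ⟨3, by omega⟩⟩
  set s := n % q with hs
  have hsq : s < q := Nat.mod_lt _ hq0
  set t := (q + r - s) % q with ht
  have htq : t < q := Nat.mod_lt _ hq0
  have h1 : (n + t) % q = r := by
    have hsr : s ≤ q + r := by omega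
    calc (n + t) % q = (n % q + t) % q := (Nat.mod_add_mod n q t).symm
      _ = (s + (q + r - s) % q) % q := by rw [← hs, ← ht]
      _ = (s + (q + r - s)) % q := Nat.add_mod_mod _ _ _
      _ = (q + r) % q := by rw [Nat.add_sub_cancel' hsr]
      _ = r % q := Nat.add_mod_left q r
      _ = r := Nat.mod_eq_of_lt hrq
  have key : ∀ j ∈ Finset.range (2 * n / q),
      n + t + j * q ∈ {k ∈ Finset.Ico n (3 * n) | q ∣ 4 * k + 1} := by
    intro j hj
    rw [Finset.mem_range] at hj
    have h2 : (j + 1) * q ≤ (2 * n / q) * q := Nat.mul_le_mul_right _ (by omega)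
    have h3 : 2 * n / q * q ≤ 2 * n := Nat.div_mul_le_self _ _
    have h4 : j * q + q = (j + 1) * q := by ring
    rw [Finset.mem_filter, Finset.mem_Ico]
    refine ⟨⟨by omega, by omega⟩, ?_⟩
    have h5 : (4 * (n + t + j * q) + 1) % q = (4 * (n + t) + 1) % q := by
      have he : 4 * (n + t + j * q) + 1 = 4 * (n + t) + 1 + (4 * j) * q := by ring
      rw [he, Nat.add_mul_mod_self_right]
    have h6 : (4 * (n + t) + 1) % q = (4 * r + 1) % q := by
      have he : 4 * (n + t) + 1 = 4 * r + 1 + (4 * ((n + t) / q)) * q := by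
        calc 4 * (n + t) + 1 = 4 * (q * ((n + t) / q) + (n + t) % q) + 1 := by
              rw [Nat.div_add_mod]
          _ = 4 * r + 1 + (4 * ((n + t) / q)) * q := by rw [h1]; ring
      rw [he, Nat.add_mul_mod_self_right]
    have h7 : (4 * r + 1) % q = 0 := Nat.dvd_iff_mod_eq_zero.mp hr
    exact Nat.dvd_iff_mod_eq_zero.mpr (by rw [h5, h6, h7])
  have hinj : Set.InjOn (fun j => n + t + j * q) (Finset.range (2 * n / q)) := by
    intro a _ b _ hab
    simp only at hab
    exact Nat.eq_of_mul_eq_mul_right hq0 (by omega)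
  calc 2 * n / q = (Finset.range (2 * n / q)).card := (Finset.card_range _).symm
    _ ≤ _ := Finset.card_le_card_of_injOn _ key hinj

private lemma fact_sq_dvd (n : ℕ) : (n.factorial) ^ 2 ∣ 4 ^ n * Pprod n := by
  have hP : Pprod n ≠ 0 := (Pprod_pos n).ne'
  have hL : (n.factorial) ^ 2 ≠ 0 := by positivity
  have hR : 4 ^ n * Pprod n ≠ 0 := by positivity
  rw [← Nat.factorization_le_iff_dvd hL hR]
  refine Finsupp.le_def.mpr fun p => ?_
  by_cases hp : p.Prime
  case neg => simp [Nat.factorization_eq_zero_of_not_prime _ hp]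
  haveI : Fact p.Prime := ⟨hp⟩
  rw [Nat.factorization_pow, Nat.factorization_mul (by positivity) hP]
  simp only [Finsupp.smul_apply, Finsupp.add_apply, smul_eq_mul]
  have hleg : (n.factorial).factorization p = ∑ i ∈ Finset.Ico 1 (n + 1), n / p ^ i := by
    rw [Nat.factorization_def _ hp]
    exact padicValNat_factorial (lt_of_le_of_lt (Nat.log_le_self p n) (Nat.lt_succ_self n))
  by_cases hp2 : p = 2
  · subst hp2
    have h4 : (4 : ℕ) ^ n = 2 ^ (2 * n) := by rw [pow_mul]; norm_num
    have hv4 : ((4 : ℕ) ^ n).factorization 2 = 2 * n := by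
      rw [h4, hp.factorization_pow, Finsupp.single_eq_same]
    have hvf : (n.factorial).factorization 2 ≤ n := by
      have := sub_one_mul_padicValNat_factorial (p := 2) n
      rw [Nat.factorization_def _ hp]
      omega
    omega
  · -- p odd
    have hodd : Odd p := hp.odd_of_ne_two hp2
    have hPfac : (Pprod n).factorization p
        = ∑ k ∈ Finset.Ico n (3 * n), ((4 * k + 1).factorization p) := by
      unfold Pprod
      rw [Nat.factorization_prod (fun k _ => by positivity)]
      exact Finset.sum_apply' p
    have hbound : ∀ k, ∑ i ∈ Finset.Ico 1 (n + 1), (if p ^ i ∣ 4 * k + 1 then 1 else 0)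
        ≤ (4 * k + 1).factorization p := by
      intro k
      rw [← Finset.card_filter]
      have hsub : {i ∈ Finset.Ico 1 (n + 1) | p ^ i ∣ 4 * k + 1}
          ⊆ Finset.Icc 1 ((4 * k + 1).factorization p) := by
        intro i hi
        rw [Finset.mem_filter, Finset.mem_Ico] at hi
        rw [Finset.mem_Icc]
        exact ⟨hi.1.1, (hp.pow_dvd_iff_le_factorization (by positivity)).mp hi.2⟩
      calc _ ≤ (Finset.Icc 1 ((4 * k + 1).factorization p)).card := Finset.card_le_card hsub
        _ = (4 * k + 1).factorization p := by rw [Nat.card_Icc]; omega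
    have hchain : 2 * (n.factorial).factorization p ≤ (Pprod n).factorization p := by
      calc 2 * (n.factorial).factorization p
          = ∑ i ∈ Finset.Ico 1 (n + 1), 2 * (n / p ^ i) := by rw [hleg, Finset.mul_sum]
        _ ≤ ∑ i ∈ Finset.Ico 1 (n + 1), 2 * n / p ^ i :=
            Finset.sum_le_sum fun i _ => Nat.mul_div_le_mul_div_assoc _ _ _
        _ ≤ ∑ i ∈ Finset.Ico 1 (n + 1), #{k ∈ Finset.Ico n (3 * n) | p ^ i ∣ 4 * k + 1} :=
            Finset.sum_le_sum fun i _ => count_ap (hodd.pow) n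
        _ = ∑ i ∈ Finset.Ico 1 (n + 1), ∑ k ∈ Finset.Ico n (3 * n),
              (if p ^ i ∣ 4 * k + 1 then 1 else 0) := by
            refine Finset.sum_congr rfl fun i _ => ?_
            rw [Finset.card_filter]
        _ = ∑ k ∈ Finset.Ico n (3 * n), ∑ i ∈ Finset.Ico 1 (n + 1),
              (if p ^ i ∣ 4 * k + 1 then 1 else 0) := Finset.sum_comm
        _ ≤ ∑ k ∈ Finset.Ico n (3 * n), (4 * k + 1).factorization p :=
            Finset.sum_le_sum fun k _ => hbound k
        _ = (Pprod n).factorization p := hPfac.symm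
    omega

private lemma step1 (n : ℕ) :
    (1728 : ℚ) ^ n * (ascPochhammer ℚ n).eval (3 / 4) * (ascPochhammer ℚ n).eval (5 / 12)
      * (ascPochhammer ℚ n).eval (1 / 12)
    = ∏ k ∈ Finset.range (3 * n), ((4 * k + 1 : ℕ) : ℚ) := by
  induction n with
  | zero => simp
  | succ n ih =>
    have h3 : 3 * (n + 1) = 3 * n + 1 + 1 + 1 := by ring
    rw [h3, Finset.prod_range_succ, Finset.prod_range_succ, Finset.prod_range_succ, ← ih,
      ascPochhammer_succ_eval, ascPochhammer_succ_eval, ascPochhammer_succ_eval]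
    push_cast
    ring

private lemma step2 (n : ℕ) :
    (4 : ℚ) ^ n * (ascPochhammer ℚ n).eval (1 / 4)
    = ∏ k ∈ Finset.range n, ((4 * k + 1 : ℕ) : ℚ) := by
  induction n with
  | zero => simp
  | succ n ih =>
    rw [Finset.prod_range_succ, ← ih, ascPochhammer_succ_eval]
    push_cast
    ring

/-- The hypergeometric series `₃F₂([3/4, 5/12, 1/12], [1/4, 1], 1728·x)` has
integer Taylor coefficients: for every `n`,
`1728^n (3/4)_n (5/12)_n (1/12)_n / ((1/4)_n (n!)²)` is an integer. -/
theorem hypergeom_3_4_5_12_1_12_integer_coeffs (n : ℕ) :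
    ∃ m : ℤ,
      1728 ^ n * (ascPochhammer ℚ n).eval (3 / 4) * (ascPochhammer ℚ n).eval (5 / 12) *
          (ascPochhammer ℚ n).eval (1 / 12) /
        ((ascPochhammer ℚ n).eval (1 / 4) * (Nat.factorial n : ℚ) ^ 2) = (m : ℚ) := by
  have hD : (0 : ℚ) < (ascPochhammer ℚ n).eval (1 / 4) := ascPochhammer_pos n _ (by norm_num)
  have hfac : (0 : ℚ) < ((n.factorial : ℚ)) ^ 2 := by positivity
  have hsplit : (∏ k ∈ Finset.range (3 * n), ((4 * k + 1 : ℕ) : ℚ))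
      = (∏ k ∈ Finset.range n, ((4 * k + 1 : ℕ) : ℚ))
        * ∏ k ∈ Finset.Ico n (3 * n), ((4 * k + 1 : ℕ) : ℚ) :=
    (Finset.prod_range_mul_prod_Ico _ (by omega)).symm
  have hcastP : ((Pprod n : ℕ) : ℚ) = ∏ k ∈ Finset.Ico n (3 * n), ((4 * k + 1 : ℕ) : ℚ) := by
    unfold Pprod; push_cast; rfl
  have hnum : (1728 : ℚ) ^ n * (ascPochhammer ℚ n).eval (3 / 4)
      * (ascPochhammer ℚ n).eval (5 / 12) * (ascPochhammer ℚ n).eval (1 / 12)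
      = 4 ^ n * (Pprod n : ℚ) * (ascPochhammer ℚ n).eval (1 / 4) := by
    rw [step1, hsplit, ← step2, hcastP]; ring
  refine ⟨((4 ^ n * Pprod n) / (n.factorial) ^ 2 : ℕ), ?_⟩
  have hdvd := fact_sq_dvd n
  have hcast : (((4 ^ n * Pprod n) / (n.factorial) ^ 2 : ℕ) : ℚ)
      = ((4 : ℚ) ^ n * (Pprod n : ℚ)) / ((n.factorial : ℚ)) ^ 2 := by
    rw [Nat.cast_div hdvd (by positivity)]
    push_cast
    ring
  rw [Int.cast_natCast, hcast, div_eq_div_iff (by positivity) (ne_of_gt hfac), hnum]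
  ring
end

section
/- For every real x with 0 ≤ x < 1/36, the following identity holds: Σ_{n=0}^{∞} ((2/9)_n (5/9)_n / ((2/3)_n · n!)) · (27x)^n = (1 − 27x)^{−1/9} · (1 − 36x + 216x²)^{−1/18} · Σ_{n=0}^{∞} ((1/36)_n (19/36)_n / ((8/9)_n · n!)) · (−1728 · x³(1 − 27x) / (1 − 36x + 216x²)²)^n, where the real powers are Real.rpow (well-defined since 1 − 27x > 0 and 1 − 36x + 216x² > 0 on [0, 1/36)), and both series converge absolutely. -/
/-!
Both sides, as functions of `x` on `[0, 1/36)`, solve the hypergeometric equation of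
`₂F₁(2/9, 5/9; 2/3; 27x)`,
`x (1 - 27x) y'' + (2/3 - 48x) y' - (10/3) y = 0`.
For the left side this is the hypergeometric equation itself. For the right side,
`A(x) G(w(x))` with `G = ₂F₁(1/36, 19/36; 8/9; ·)`, substituting the equation of `G` into the
chain rule leaves two rational-function identities in `x`, one for the coefficient of `G` and
one for that of `G'`.

The equation has a regular singular point at `0` with exponents `0` and `1/3`. The Wronskian `W` of
the two sides satisfies `(μ W)' = 0` with `μ = x^(2/3) (1 - 27x)^(10/9)`. Both sides are
differentiable at `0`, so `μ W → 0` there, which forces `W = 0`. Then `(lhs / rhs)' = 0`, and the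
two sides agree at `x = 0`.
-/

open Filter Asymptotics Set Topology

noncomputable section

namespace ShimuraPullback

section PowerSeries

variable {f g : ℕ → ℝ} {y : ℝ}

def PolyGrowth (f : ℕ → ℝ) : Prop := ∃ k : ℕ, f =O[atTop] fun n => (n : ℝ) ^ k

def derivCoeff (f : ℕ → ℝ) (n : ℕ) : ℝ := ((n : ℝ) + 1) * f (n + 1)

def seriesEval (f : ℕ → ℝ) (y : ℝ) : ℝ := ∑' n, f n * y ^ n

lemma isBigO_natCast_add (c : ℝ) : (fun n : ℕ => (n : ℝ) + c) =O[atTop] fun n => (n : ℝ) := by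
  refine IsBigO.of_bound (1 + |c|) (eventually_atTop.2 ⟨1, fun n hn => ?_⟩)
  have hn : (1 : ℝ) ≤ n := by exact_mod_cast hn
  rw [Real.norm_natCast, Real.norm_eq_abs]
  calc |(n : ℝ) + c| ≤ n + |c| := (abs_add_le _ _).trans (by rw [Nat.abs_cast])
    _ ≤ (1 + |c|) * n := by nlinarith [abs_nonneg c]

lemma polyGrowth_natCast_add (c : ℝ) : PolyGrowth fun n => (n : ℝ) + c :=
  ⟨1, by simpa using isBigO_natCast_add c⟩

lemma PolyGrowth.mul (hf : PolyGrowth f) (hg : PolyGrowth g) :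
    PolyGrowth fun n => f n * g n := by
  obtain ⟨k, hk⟩ := hf
  obtain ⟨j, hj⟩ := hg
  exact ⟨k + j, (hk.mul hj).congr_right fun n => (pow_add _ k j).symm⟩

lemma PolyGrowth.comp_succ (hf : PolyGrowth f) : PolyGrowth fun n => f (n + 1) := by
  obtain ⟨k, hk⟩ := hf
  refine ⟨k, (hk.comp_tendsto (tendsto_add_atTop_nat 1)).trans ?_⟩
  simpa [Function.comp_def] using (isBigO_natCast_add 1).pow k

lemma PolyGrowth.derivCoeff (hf : PolyGrowth f) : PolyGrowth (derivCoeff f) :=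
  (polyGrowth_natCast_add 1).mul hf.comp_succ

lemma PolyGrowth.natCast_mul (hf : PolyGrowth f) : PolyGrowth fun n => (n : ℝ) * f n := by
  simpa using (polyGrowth_natCast_add 0).mul hf

lemma PolyGrowth.of_abs_le_one (hf : ∀ n, |f n| ≤ 1) : PolyGrowth f :=
  ⟨0, IsBigO.of_bound 1 (Eventually.of_forall fun n => by simpa using hf n)⟩

lemma PolyGrowth.summable_norm_mul_pow (hf : PolyGrowth f) (hy : |y| < 1) :
    Summable fun n => ‖f n * y ^ n‖ := by
  obtain ⟨k, hk⟩ := hf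
  refine summable_of_isBigO_nat
    (summable_norm_pow_mul_geometric_of_norm_lt_one k (by rwa [Real.norm_eq_abs])) ?_
  exact (hk.mul (isBigO_refl (fun n => y ^ n) atTop)).norm_left.norm_right

lemma PolyGrowth.hasSum (hf : PolyGrowth f) (hy : |y| < 1) :
    HasSum (fun n => f n * y ^ n) (seriesEval f y) :=
  (hf.summable_norm_mul_pow hy).of_norm.hasSum

lemma seriesEval_zero : seriesEval f 0 = f 0 := by
  rw [seriesEval, tsum_eq_single 0 fun n hn => by simp [hn]]
  simp

lemma hasDerivAt_seriesEval (hf : PolyGrowth f) (hy : |y| < 1) :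
    HasDerivAt (seriesEval f) (seriesEval (derivCoeff f) y) y := by
  obtain ⟨ρ, hyρ, hρ⟩ := exists_between hy
  have hρ0 : 0 < ρ := (abs_nonneg y).trans_lt hyρ
  have hbound (n : ℕ) (z : ℝ) (hz : z ∈ Ioo (-ρ) ρ) :
      ‖f n * (n * z ^ (n - 1))‖ ≤ ‖f n * (n * ρ ^ (n - 1))‖ := by
    simp only [norm_mul, norm_pow, Real.norm_eq_abs, abs_of_pos hρ0]
    gcongr
    exact (abs_lt.2 hz).le
  have hu : Summable fun n : ℕ => ‖f n * (n * ρ ^ (n - 1))‖ := by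
    rw [← summable_nat_add_iff 1]
    refine (hf.derivCoeff.summable_norm_mul_pow (by rwa [abs_of_pos hρ0])).congr fun n => ?_
    simp only [derivCoeff, Nat.add_sub_cancel, Nat.cast_add_one, norm_mul]
    ring
  have hsum : Summable fun n : ℕ => f n * (n * y ^ (n - 1)) :=
    Summable.of_norm_bounded hu fun n => hbound n y (abs_lt.1 hyρ)
  refine (hasDerivAt_tsum_of_isPreconnected hu isOpen_Ioo isPreconnected_Ioo
    (fun n z _ => (hasDerivAt_pow n z).const_mul (f n)) hbound (y₀ := 0) ⟨by linarith, hρ0⟩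
    (hf.hasSum (by norm_num)).summable (abs_lt.1 hyρ)).congr_deriv ?_
  rw [hsum.tsum_eq_zero_add, seriesEval]
  simp only [derivCoeff, Nat.cast_zero, zero_mul, mul_zero, zero_add, Nat.cast_add_one,
    add_tsub_cancel_right]
  exact tsum_congr fun n => by ring

lemma hasDerivAt_seriesEval_const_mul (hf : PolyGrowth f) {k x : ℝ} (hx : |k * x| < 1) :
    HasDerivAt (fun x => seriesEval f (k * x)) (k * seriesEval (derivCoeff f) (k * x)) x :=
  ((hasDerivAt_seriesEval hf hx).comp x ((hasDerivAt_id' x).const_mul k)).congr_deriv (by ring)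

lemma mul_seriesEval_derivCoeff (hf : PolyGrowth f) (hy : |y| < 1) :
    y * seriesEval (derivCoeff f) y = seriesEval (fun n => n * f n) y := by
  rw [seriesEval, seriesEval, (hf.natCast_mul.hasSum hy).summable.tsum_eq_zero_add,
    ← tsum_mul_left]
  simp only [derivCoeff, Nat.cast_zero, zero_mul, zero_add, Nat.cast_add_one, pow_succ]
  exact tsum_congr fun n => by ring

lemma seriesEval_pos (hf0 : f 0 = 1) (hf : ∀ n, |f n| ≤ 1) (hy : |y| < 1 / 2) :
    0 < seriesEval f y := by
  have hy1 : |y| < 1 := by linarith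
  have htail : HasSum (fun n : ℕ => |y| ^ (n + 1)) (|y| / (1 - |y|)) := by
    simpa only [pow_succ', div_eq_mul_inv] using
      (hasSum_geometric_of_lt_one (abs_nonneg y) hy1).mul_left |y|
  have hbound := tsum_of_norm_bounded (f := fun n => f (n + 1) * y ^ (n + 1)) htail fun n => by
    rw [norm_mul, norm_pow, Real.norm_eq_abs, Real.norm_eq_abs]
    exact mul_le_of_le_one_left (by positivity) (hf (n + 1))
  have hsmall : |y| / (1 - |y|) < 1 := by rw [div_lt_one (by linarith)]; linarith
  rw [seriesEval, ((PolyGrowth.of_abs_le_one hf).hasSum hy1).summable.tsum_eq_zero_add, hf0]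
  rw [Real.norm_eq_abs] at hbound
  linarith [neg_abs_le (∑' n : ℕ, f (n + 1) * y ^ (n + 1))]

theorem hypergeometric_ode {F : ℕ → ℝ} {a b c : ℝ} (hF : PolyGrowth F)
    (hrec : ∀ n : ℕ, ((n : ℝ) + 1) * (c + n) * F (n + 1) = (a + n) * (b + n) * F n)
    (hy : |y| < 1) :
    y * (1 - y) * seriesEval (derivCoeff (derivCoeff F)) y
      + (c - (a + b + 1) * y) * seriesEval (derivCoeff F) y - a * b * seriesEval F y = 0 := by
  have hF1 := hF.derivCoeff
  have hFpred := (polyGrowth_natCast_add (-1)).mul hF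
  have hyy : y * (y * seriesEval (derivCoeff (derivCoeff F)) y)
      = seriesEval (fun n => n * ((n + -1) * F n)) y := by
    have hshift : (fun n : ℕ => (n : ℝ) * derivCoeff F n)
        = derivCoeff (fun n => ((n : ℝ) + -1) * F n) := by
      funext n
      simp only [derivCoeff, Nat.cast_add_one]
      ring
    rw [mul_seriesEval_derivCoeff hF1 hy, hshift, mul_seriesEval_derivCoeff hFpred hy]
  -- Written in powers of `y`, the left side has `n`-th coefficient
  -- `(n + 1) (c + n) F (n + 1) - (a + n) (b + n) F n`.
  have hsum : HasSum (fun _ : ℕ => (0 : ℝ))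
      (seriesEval (fun n => n * derivCoeff F n) y - seriesEval (fun n => n * ((n + -1) * F n)) y
        + (c * seriesEval (derivCoeff F) y - (a + b + 1) * seriesEval (fun n => n * F n) y)
        - a * b * seriesEval F y) := by
    refine (((hF1.natCast_mul.hasSum hy).sub (hFpred.natCast_mul.hasSum hy)).add
      (((hF1.hasSum hy).mul_left c).sub ((hF.natCast_mul.hasSum hy).mul_left (a + b + 1)))).sub
      ((hF.hasSum hy).mul_left (a * b)) |>.congr_fun fun n => ?_
    simp only [derivCoeff]
    linear_combination -(y ^ n) * hrec n
  rw [← mul_seriesEval_derivCoeff hF1 hy, ← hyy, ← mul_seriesEval_derivCoeff hF hy] at hsum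
  linear_combination hsum.unique hasSum_zero

end PowerSeries

section Hypergeometric

variable {a b c : ℝ}

@[simp]
lemma ordinaryHypergeometricCoefficient_zero (a b c : ℝ) :
    ordinaryHypergeometricCoefficient a b c 0 = 1 := by
  simp [ordinaryHypergeometricCoefficient]

lemma ascPochhammer_div_eq_ordinaryHypergeometricCoefficient (a b c : ℝ) (n : ℕ) :
    (ascPochhammer ℝ n).eval a * (ascPochhammer ℝ n).eval b
        / ((ascPochhammer ℝ n).eval c * (n.factorial : ℝ))
      = ordinaryHypergeometricCoefficient a b c n := by
  rw [ordinaryHypergeometricCoefficient]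
  ring

lemma ordinaryHypergeometricCoefficient_succ_mul (hc : 0 < c) (n : ℕ) :
    ((n : ℝ) + 1) * (c + n) * ordinaryHypergeometricCoefficient a b c (n + 1)
      = (a + n) * (b + n) * ordinaryHypergeometricCoefficient a b c n := by
  have hpoch := (ascPochhammer_pos n c hc).ne'
  have hcn : c + n ≠ 0 := by positivity
  simp only [ordinaryHypergeometricCoefficient, ascPochhammer_succ_eval, Nat.factorial_succ,
    Nat.cast_mul, Nat.cast_add_one]
  field_simp

lemma abs_ordinaryHypergeometricCoefficient_le_one (ha : 0 < a) (hac : a ≤ c) (hb : 0 < b)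
    (hb1 : b ≤ 1) (n : ℕ) : |ordinaryHypergeometricCoefficient a b c n| ≤ 1 := by
  have hc : 0 < c := ha.trans_le hac
  have hpos (n : ℕ) : 0 < ordinaryHypergeometricCoefficient a b c n := by
    have := ascPochhammer_pos n a ha
    have := ascPochhammer_pos n b hb
    have := ascPochhammer_pos n c hc
    positivity
  rw [abs_of_pos (hpos n)]
  induction n with
  | zero => simp
  | succ n ih =>
    have hrec := ordinaryHypergeometricCoefficient_succ_mul (a := a) (b := b) hc n
    have hratio : (a + n) * (b + n) ≤ ((n : ℝ) + 1) * (c + n) := by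
      have := Nat.cast_nonneg (α := ℝ) n
      nlinarith
    have hden : 0 < ((n : ℝ) + 1) * (c + n) := by positivity
    nlinarith [hpos n, hpos (n + 1)]

lemma polyGrowth_ordinaryHypergeometricCoefficient (ha : 0 < a) (hac : a ≤ c) (hb : 0 < b)
    (hb1 : b ≤ 1) : PolyGrowth (ordinaryHypergeometricCoefficient a b c) :=
  .of_abs_le_one (abs_ordinaryHypergeometricCoefficient_le_one ha hac hb hb1)

end Hypergeometric

section Wronskian

variable {r : ℝ}

lemma eqOn_zero_of_hasDerivAt_zero {φ : ℝ → ℝ} (hφ : ∀ x ∈ Ioo 0 r, HasDerivAt φ 0 x)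
    (hlim : Tendsto φ (𝓝[>] 0) (𝓝 0)) : EqOn φ 0 (Ioo 0 r) := by
  intro x hx
  have hconst : ∀ z ∈ Ioo 0 r, φ z = φ x := fun z hz =>
    isOpen_Ioo.is_const_of_deriv_eq_zero isPreconnected_Ioo
      (fun z hz => (hφ z hz).differentiableAt.differentiableWithinAt)
      (fun z hz => (hφ z hz).deriv) hz hx
  have hlim' : Tendsto φ (𝓝[>] 0) (𝓝 (φ x)) :=
    tendsto_const_nhds.congr' <| eventuallyEq_of_mem (Ioo_mem_nhdsGT (hx.1.trans hx.2))
      fun z hz => (hconst z hz).symm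
  exact tendsto_nhds_unique hlim' hlim

lemma wronskian_eq_zero {f f' f'' g g' g'' α β γ μ μ' : ℝ → ℝ}
    (hf : ∀ x ∈ Ico 0 r, HasDerivAt f (f' x) x) (hf' : ∀ x ∈ Ico 0 r, HasDerivAt f' (f'' x) x)
    (hg : ∀ x ∈ Ico 0 r, HasDerivAt g (g' x) x) (hg' : ∀ x ∈ Ico 0 r, HasDerivAt g' (g'' x) x)
    (hf_ode : ∀ x ∈ Ioo 0 r, α x * f'' x + β x * f' x + γ x * f x = 0)
    (hg_ode : ∀ x ∈ Ioo 0 r, α x * g'' x + β x * g' x + γ x * g x = 0)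
    (hα : ∀ x ∈ Ioo 0 r, α x ≠ 0)
    (hμ : ∀ x ∈ Ioo 0 r, HasDerivAt μ (μ' x) x) (hμ' : ∀ x ∈ Ioo 0 r, α x * μ' x = β x * μ x)
    (hμ0 : ∀ x ∈ Ioo 0 r, μ x ≠ 0) (hlim : Tendsto μ (𝓝[>] 0) (𝓝 0)) :
    ∀ x ∈ Ioo 0 r, f x * g' x - f' x * g x = 0 := by
  intro x hx
  have hr : (0 : ℝ) ∈ Ico 0 r := ⟨le_rfl, hx.1.trans hx.2⟩
  have hderiv (z : ℝ) (hz : z ∈ Ioo 0 r) :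
      HasDerivAt (fun z => μ z * (f z * g' z - f' z * g z)) 0 z := by
    have hz' : z ∈ Ico 0 r := Ioo_subset_Ico_self hz
    refine ((hμ z hz).mul (((hf z hz').mul (hg' z hz')).sub
      ((hf' z hz').mul (hg z hz')))).congr_deriv ?_
    apply mul_left_cancel₀ (hα z hz)
    simp only [Pi.sub_apply, Pi.mul_apply]
    linear_combination (f z * g' z - f' z * g z) * hμ' z hz + μ z * f z * hg_ode z hz
      - μ z * g z * hf_ode z hz
  have hcont : ContinuousAt (fun z => f z * g' z - f' z * g z) 0 :=
    ((hf 0 hr).continuousAt.mul (hg' 0 hr).continuousAt).sub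
      ((hf' 0 hr).continuousAt.mul (hg 0 hr).continuousAt)
  have hlimW := hlim.mul (hcont.tendsto.mono_left nhdsWithin_le_nhds)
  rw [zero_mul] at hlimW
  exact (mul_eq_zero.1 (eqOn_zero_of_hasDerivAt_zero hderiv hlimW hx)).resolve_left (hμ0 x hx)

lemma eqOn_of_wronskian_eq_zero {f f' g g' : ℝ → ℝ}
    (hf : ∀ x ∈ Ico 0 r, HasDerivAt f (f' x) x) (hg : ∀ x ∈ Ico 0 r, HasDerivAt g (g' x) x)
    (hW : ∀ x ∈ Ioo 0 r, f x * g' x - f' x * g x = 0) (hg0 : ∀ x ∈ Ico 0 r, g x ≠ 0)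
    (h0 : f 0 = g 0) : EqOn f g (Ico 0 r) := by
  rintro x ⟨hx0, hxr⟩
  rcases hx0.eq_or_lt with rfl | hx0
  · exact h0
  have hr : (0 : ℝ) ∈ Ico 0 r := ⟨le_rfl, hx0.trans hxr⟩
  have hderiv (z : ℝ) (hz : z ∈ Ioo 0 r) : HasDerivAt (fun z => f z / g z - 1) 0 z := by
    have hz' : z ∈ Ico 0 r := Ioo_subset_Ico_self hz
    refine (((hf z hz').div (hg z hz') (hg0 z hz')).sub_const 1).congr_deriv ?_
    rw [div_eq_zero_iff]
    left
    linear_combination -hW z hz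
  have hlim : Tendsto (fun z => f z / g z - 1) (𝓝[>] 0) (𝓝 0) := by
    have hcont : Tendsto (fun z => f z / g z - 1) (𝓝 0) (𝓝 (f 0 / g 0 - 1)) :=
      (((hf 0 hr).continuousAt.div (hg 0 hr).continuousAt (hg0 0 hr)).sub
        continuousAt_const).tendsto
    rw [h0, div_self (h0 ▸ hg0 0 hr), sub_self] at hcont
    exact hcont.mono_left nhdsWithin_le_nhds
  have := eqOn_zero_of_hasDerivAt_zero hderiv hlim ⟨hx0, hxr⟩
  rwa [Pi.zero_apply, sub_eq_zero, div_eq_one_iff_eq (hg0 x ⟨hx0.le, hxr⟩)] at this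

end Wronskian

section Pullback

variable {A P P' w w' w'' G G' G'' : ℝ → ℝ} {x : ℝ}

lemma hasDerivAt_mul_comp (hA : HasDerivAt A (A x * P x) x) (hw : HasDerivAt w (w' x) x)
    (hG : HasDerivAt G (G' (w x)) (w x)) :
    HasDerivAt (fun x => A x * G (w x)) (A x * (P x * G (w x) + G' (w x) * w' x)) x :=
  (hA.mul (hG.comp x hw)).congr_deriv (by simp only [Function.comp_apply]; ring)

lemma hasDerivAt_mul_comp_deriv (hA : HasDerivAt A (A x * P x) x) (hP : HasDerivAt P (P' x) x)
    (hw : HasDerivAt w (w' x) x) (hw' : HasDerivAt w' (w'' x) x)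
    (hG : HasDerivAt G (G' (w x)) (w x)) (hG' : HasDerivAt G' (G'' (w x)) (w x)) :
    HasDerivAt (fun x => A x * (P x * G (w x) + G' (w x) * w' x))
      (A x * ((P x ^ 2 + P' x) * G (w x) + 2 * P x * G' (w x) * w' x + G'' (w x) * w' x ^ 2
        + G' (w x) * w'' x)) x :=
  (hA.mul ((hP.mul (hG.comp x hw)).add ((hG'.comp x hw).mul hw'))).congr_deriv <| by
    simp only [Function.comp_apply, Pi.add_apply, Pi.mul_apply]
    ring

/-- After eliminating `G''` through the equation of `G`, `h₁` and `h₀` say that the coefficients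
of `G'` and `G` in the equation for `A · G ∘ w` vanish. -/
lemma pullback_ode {α β γ α₀ β₀ γ₀ A P P' w' w'' G G' G'' : ℝ} (hα₀ : α₀ ≠ 0)
    (hG : α₀ * G'' + β₀ * G' + γ₀ * G = 0)
    (h₁ : α₀ * (α * (2 * P * w' + w'') + β * w') = α * w' ^ 2 * β₀)
    (h₀ : α₀ * (α * (P ^ 2 + P') + β * P + γ) = α * w' ^ 2 * γ₀) :
    α * (A * ((P ^ 2 + P') * G + 2 * P * G' * w' + G'' * w' ^ 2 + G' * w''))
      + β * (A * (P * G + G' * w')) + γ * (A * G) = 0 := by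
  apply mul_left_cancel₀ hα₀
  linear_combination A * G' * h₁ + A * G * h₀ + α * A * w' ^ 2 * hG

end Pullback

section Shimura

def pullbackVar (x : ℝ) : ℝ := -1728 * x ^ 3 * (1 - 27 * x) / (1 - 36 * x + 216 * x ^ 2) ^ 2

def pullbackVarDeriv (x : ℝ) : ℝ :=
  -5184 * x ^ 2 * (1 - 24 * x) ^ 2 / (1 - 36 * x + 216 * x ^ 2) ^ 3

def pullbackVarDeriv2 (x : ℝ) : ℝ :=
  -10368 * x * (1 - 24 * x) * (1 - 30 * x + 5184 * x ^ 3) / (1 - 36 * x + 216 * x ^ 2) ^ 4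

def prefactor (x : ℝ) : ℝ :=
  (1 - 27 * x) ^ (-(1 / 9) : ℝ) * (1 - 36 * x + 216 * x ^ 2) ^ (-(1 / 18) : ℝ)

def prefactorLogDeriv (x : ℝ) : ℝ :=
  3 / (1 - 27 * x) + (2 - 24 * x) / (1 - 36 * x + 216 * x ^ 2)

def prefactorLogDeriv2 (x : ℝ) : ℝ :=
  81 / (1 - 27 * x) ^ 2 + 48 * (1 - 18 * x + 108 * x ^ 2) / (1 - 36 * x + 216 * x ^ 2) ^ 2

local notation "F₁" => ordinaryHypergeometricCoefficient (2 / 9 : ℝ) (5 / 9) (2 / 3)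
local notation "F₂" => ordinaryHypergeometricCoefficient (1 / 36 : ℝ) (19 / 36) (8 / 9)

def lhs (x : ℝ) : ℝ := seriesEval F₁ (27 * x)

def lhsDeriv (x : ℝ) : ℝ := 27 * seriesEval (derivCoeff F₁) (27 * x)

def lhsDeriv2 (x : ℝ) : ℝ := 27 * (27 * seriesEval (derivCoeff (derivCoeff F₁)) (27 * x))

def rhs (x : ℝ) : ℝ := prefactor x * seriesEval F₂ (pullbackVar x)

def rhsDeriv (x : ℝ) : ℝ :=
  prefactor x * (prefactorLogDeriv x * seriesEval F₂ (pullbackVar x)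
    + seriesEval (derivCoeff F₂) (pullbackVar x) * pullbackVarDeriv x)

def rhsDeriv2 (x : ℝ) : ℝ :=
  prefactor x * ((prefactorLogDeriv x ^ 2 + prefactorLogDeriv2 x) * seriesEval F₂ (pullbackVar x)
    + 2 * prefactorLogDeriv x * seriesEval (derivCoeff F₂) (pullbackVar x) * pullbackVarDeriv x
    + seriesEval (derivCoeff (derivCoeff F₂)) (pullbackVar x) * pullbackVarDeriv x ^ 2
    + seriesEval (derivCoeff F₂) (pullbackVar x) * pullbackVarDeriv2 x)

lemma polyGrowth_F₁ : PolyGrowth F₁ :=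
  polyGrowth_ordinaryHypergeometricCoefficient (by norm_num) (by norm_num) (by norm_num)
    (by norm_num)

lemma polyGrowth_F₂ : PolyGrowth F₂ :=
  polyGrowth_ordinaryHypergeometricCoefficient (by norm_num) (by norm_num) (by norm_num)
    (by norm_num)

variable {x : ℝ}

lemma pullback_denominators_pos (hx : x ∈ Ico (0 : ℝ) (1 / 36)) :
    0 < 1 - 27 * x ∧ 0 < 1 - 36 * x + 216 * x ^ 2 := by
  obtain ⟨hx0, hx1⟩ := hx
  constructor <;> nlinarith

lemma abs_27_mul_lt_one (hx : x ∈ Ico (0 : ℝ) (1 / 36)) : |27 * x| < 1 :=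
  abs_lt.2 ⟨by linarith [hx.1], by linarith [hx.2]⟩

lemma pullbackVar_neg (hx : x ∈ Ioo (0 : ℝ) (1 / 36)) : pullbackVar x < 0 := by
  obtain ⟨hL, hD⟩ := pullback_denominators_pos (Ioo_subset_Ico_self hx)
  have := hx.1
  have : 0 < x ^ 3 * (1 - 27 * x) := by positivity
  exact div_neg_of_neg_of_pos (by linarith) (by positivity)

lemma abs_pullbackVar_le (hx : x ∈ Ico (0 : ℝ) (1 / 36)) : |pullbackVar x| ≤ 1 / 3 := by
  obtain ⟨hL, hD⟩ := pullback_denominators_pos hx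
  obtain ⟨hx0, hx1⟩ := hx
  have hnum : -1728 * x ^ 3 * (1 - 27 * x) ≤ 0 := by
    have : 0 ≤ x ^ 3 * (1 - 27 * x) := by positivity
    linarith
  -- `(1 - 36x + 216x²)² - 5184x³(1 - 27x) = (1 - 36x)((1 - 36x) + 432x²(1 - 12x))`
  have hkey : 0 ≤ (1 - 36 * x) * ((1 - 36 * x) + 432 * x ^ 2 * (1 - 12 * x)) := by
    have : 0 ≤ 1 - 36 * x := by linarith
    have : 0 ≤ 1 - 12 * x := by linarith
    positivity
  rw [pullbackVar, abs_div, abs_of_nonpos hnum, abs_of_pos (by positivity),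
    div_le_iff₀ (by positivity)]
  nlinarith

lemma hasDerivAt_one_sub_mul (c x : ℝ) : HasDerivAt (fun x => 1 - c * x) (-c) x := by
  simpa using ((hasDerivAt_id' x).const_mul c).const_sub 1

lemma hasDerivAt_pullbackDenom (x : ℝ) :
    HasDerivAt (fun x : ℝ => 1 - 36 * x + 216 * x ^ 2) (432 * x - 36) x :=
  ((hasDerivAt_one_sub_mul 36 x).fun_add ((hasDerivAt_pow 2 x).const_mul 216)).congr_deriv
    (by norm_num; ring)

lemma hasDerivAt_pullbackVar (hD : 1 - 36 * x + 216 * x ^ 2 ≠ 0) :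
    HasDerivAt pullbackVar (pullbackVarDeriv x) x := by
  refine ((((hasDerivAt_pow 3 x).const_mul (-1728)).fun_mul (hasDerivAt_one_sub_mul 27 x)).fun_div
    ((hasDerivAt_pullbackDenom x).fun_pow 2) (pow_ne_zero 2 hD)).congr_deriv ?_
  rw [pullbackVarDeriv, div_eq_div_iff (by positivity) (by positivity)]
  norm_num
  ring

lemma hasDerivAt_pullbackVarDeriv (hD : 1 - 36 * x + 216 * x ^ 2 ≠ 0) :
    HasDerivAt pullbackVarDeriv (pullbackVarDeriv2 x) x := by
  refine ((((hasDerivAt_pow 2 x).const_mul (-5184)).fun_mul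
    ((hasDerivAt_one_sub_mul 24 x).fun_pow 2)).fun_div
    ((hasDerivAt_pullbackDenom x).fun_pow 3) (pow_ne_zero 3 hD)).congr_deriv ?_
  rw [pullbackVarDeriv2, div_eq_div_iff (by positivity) (by positivity)]
  norm_num
  ring

lemma hasDerivAt_prefactorLogDeriv (hL : 1 - 27 * x ≠ 0) (hD : 1 - 36 * x + 216 * x ^ 2 ≠ 0) :
    HasDerivAt prefactorLogDeriv (prefactorLogDeriv2 x) x := by
  refine (((hasDerivAt_const x (3 : ℝ)).fun_div (hasDerivAt_one_sub_mul 27 x) hL).fun_add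
    (((hasDerivAt_id' x).const_mul 24 |>.const_sub 2).fun_div (hasDerivAt_pullbackDenom x)
      hD)).congr_deriv ?_
  rw [prefactorLogDeriv2]
  field_simp
  ring

lemma hasDerivAt_prefactor (hL : 0 < 1 - 27 * x) (hD : 0 < 1 - 36 * x + 216 * x ^ 2) :
    HasDerivAt prefactor (prefactor x * prefactorLogDeriv x) x := by
  refine (((hasDerivAt_one_sub_mul 27 x).rpow_const (p := -(1 / 9)) (Or.inl hL.ne')).fun_mul
    ((hasDerivAt_pullbackDenom x).rpow_const (p := -(1 / 18)) (Or.inl hD.ne'))).congr_deriv ?_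
  rw [prefactor, prefactorLogDeriv, Real.rpow_sub_one hL.ne', Real.rpow_sub_one hD.ne']
  field_simp
  ring

/- `field_simp` rewrites the denominators `1 - 27 * x` and `1 - 36 * x + 216 * x ^ 2` into
`1 - x * 27` and `1 - x * 36 + x ^ 2 * 216` before looking for their nonvanishing, so the
hypotheses are restated in that form where `field_simp` needs them. -/

lemma hasDerivAt_integratingFactor (hx : 0 < x) (hL : 0 < 1 - 27 * x) :
    HasDerivAt (fun x => x ^ (2 / 3 : ℝ) * (1 - 27 * x) ^ (10 / 9 : ℝ))
      ((2 / 3 - 48 * x) / (x * (1 - 27 * x)) * (x ^ (2 / 3 : ℝ) * (1 - 27 * x) ^ (10 / 9 : ℝ)))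
      x := by
  refine ((Real.hasDerivAt_rpow_const (p := 2 / 3) (Or.inl hx.ne')).fun_mul
    ((hasDerivAt_one_sub_mul 27 x).rpow_const (p := 10 / 9) (Or.inl hL.ne'))).congr_deriv ?_
  have hL' : 1 - x * 27 ≠ 0 := by ring_nf at hL ⊢; exact hL.ne'
  rw [Real.rpow_sub_one hx.ne', Real.rpow_sub_one hL.ne']
  field_simp
  ring

lemma tendsto_integratingFactor :
    Tendsto (fun x : ℝ => x ^ (2 / 3 : ℝ) * (1 - 27 * x) ^ (10 / 9 : ℝ)) (𝓝[>] 0) (𝓝 0) := by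
  have hcont : ContinuousAt (fun x : ℝ => x ^ (2 / 3 : ℝ) * (1 - 27 * x) ^ (10 / 9 : ℝ)) 0 :=
    (Real.continuousAt_rpow_const _ _ (Or.inr (by norm_num))).mul
      ((hasDerivAt_one_sub_mul 27 0).continuousAt.rpow_const (Or.inr (by norm_num)))
  simpa [Real.zero_rpow] using hcont.tendsto.mono_left nhdsWithin_le_nhds

lemma pullbackVar_coeff_deriv_eq (hL : 1 - 27 * x ≠ 0) (hD : 1 - 36 * x + 216 * x ^ 2 ≠ 0) :
    pullbackVar x * (1 - pullbackVar x) * (x * (1 - 27 * x)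
        * (2 * prefactorLogDeriv x * pullbackVarDeriv x + pullbackVarDeriv2 x)
        + (2 / 3 - 48 * x) * pullbackVarDeriv x)
      = x * (1 - 27 * x) * pullbackVarDeriv x ^ 2
        * (8 / 9 - (1 / 36 + 19 / 36 + 1) * pullbackVar x) := by
  have hD' : 1 - x * 36 + x ^ 2 * 216 ≠ 0 := by ring_nf at hD ⊢; exact hD
  have hL' : 1 - x * 27 ≠ 0 := by ring_nf at hL ⊢; exact hL
  simp only [pullbackVar, pullbackVarDeriv, pullbackVarDeriv2, prefactorLogDeriv]
  field_simp
  ring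

lemma pullbackVar_coeff_eq (hL : 1 - 27 * x ≠ 0) (hD : 1 - 36 * x + 216 * x ^ 2 ≠ 0) :
    pullbackVar x * (1 - pullbackVar x) * (x * (1 - 27 * x)
        * (prefactorLogDeriv x ^ 2 + prefactorLogDeriv2 x) + (2 / 3 - 48 * x) * prefactorLogDeriv x
        + -10 / 3)
      = x * (1 - 27 * x) * pullbackVarDeriv x ^ 2 * -(1 / 36 * (19 / 36)) := by
  have hD' : 1 - x * 36 + x ^ 2 * 216 ≠ 0 := by ring_nf at hD ⊢; exact hD
  have hL' : 1 - x * 27 ≠ 0 := by ring_nf at hL ⊢; exact hL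
  simp only [pullbackVar, pullbackVarDeriv, prefactorLogDeriv, prefactorLogDeriv2]
  field_simp
  ring

lemma hasDerivAt_lhs (hx : x ∈ Ico (0 : ℝ) (1 / 36)) : HasDerivAt lhs (lhsDeriv x) x :=
  hasDerivAt_seriesEval_const_mul polyGrowth_F₁ (abs_27_mul_lt_one hx)

lemma hasDerivAt_lhsDeriv (hx : x ∈ Ico (0 : ℝ) (1 / 36)) :
    HasDerivAt lhsDeriv (lhsDeriv2 x) x :=
  (hasDerivAt_seriesEval_const_mul polyGrowth_F₁.derivCoeff (abs_27_mul_lt_one hx)).const_mul 27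

lemma lhs_ode (hx : x ∈ Ico (0 : ℝ) (1 / 36)) :
    x * (1 - 27 * x) * lhsDeriv2 x + (2 / 3 - 48 * x) * lhsDeriv x + -10 / 3 * lhs x = 0 := by
  rw [lhs, lhsDeriv, lhsDeriv2]
  linear_combination 27 * hypergeometric_ode polyGrowth_F₁
    (ordinaryHypergeometricCoefficient_succ_mul (by norm_num)) (abs_27_mul_lt_one hx)

lemma hasDerivAt_rhs (hx : x ∈ Ico (0 : ℝ) (1 / 36)) : HasDerivAt rhs (rhsDeriv x) x :=
  have ⟨hL, hD⟩ := pullback_denominators_pos hx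
  hasDerivAt_mul_comp (hasDerivAt_prefactor hL hD) (hasDerivAt_pullbackVar hD.ne')
    (hasDerivAt_seriesEval polyGrowth_F₂ ((abs_pullbackVar_le hx).trans_lt (by norm_num)))

lemma hasDerivAt_rhsDeriv (hx : x ∈ Ico (0 : ℝ) (1 / 36)) :
    HasDerivAt rhsDeriv (rhsDeriv2 x) x :=
  have ⟨hL, hD⟩ := pullback_denominators_pos hx
  have hw : |pullbackVar x| < 1 := (abs_pullbackVar_le hx).trans_lt (by norm_num)
  hasDerivAt_mul_comp_deriv (hasDerivAt_prefactor hL hD)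
    (hasDerivAt_prefactorLogDeriv hL.ne' hD.ne') (hasDerivAt_pullbackVar hD.ne')
    (hasDerivAt_pullbackVarDeriv hD.ne') (hasDerivAt_seriesEval polyGrowth_F₂ hw)
    (hasDerivAt_seriesEval polyGrowth_F₂.derivCoeff hw)

lemma rhs_ode (hx : x ∈ Ioo (0 : ℝ) (1 / 36)) :
    x * (1 - 27 * x) * rhsDeriv2 x + (2 / 3 - 48 * x) * rhsDeriv x + -10 / 3 * rhs x = 0 := by
  obtain ⟨hL, hD⟩ := pullback_denominators_pos (Ioo_subset_Ico_self hx)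
  have hw := pullbackVar_neg hx
  refine pullback_ode (mul_ne_zero hw.ne (by linarith)) ?_
    (pullbackVar_coeff_deriv_eq hL.ne' hD.ne') (pullbackVar_coeff_eq hL.ne' hD.ne')
  linear_combination hypergeometric_ode polyGrowth_F₂
    (ordinaryHypergeometricCoefficient_succ_mul (by norm_num))
    ((abs_pullbackVar_le (Ioo_subset_Ico_self hx)).trans_lt (by norm_num))

lemma rhs_pos (hx : x ∈ Ico (0 : ℝ) (1 / 36)) : 0 < rhs x := by
  obtain ⟨hL, hD⟩ := pullback_denominators_pos hx
  have hA : 0 < prefactor x := by unfold prefactor; positivity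
  exact mul_pos hA (seriesEval_pos (by simp)
    (abs_ordinaryHypergeometricCoefficient_le_one (by norm_num) (by norm_num) (by norm_num)
      (by norm_num)) ((abs_pullbackVar_le hx).trans_lt (by norm_num)))

theorem lhs_eqOn_rhs : EqOn lhs rhs (Ico 0 (1 / 36)) := by
  refine eqOn_of_wronskian_eq_zero (fun x hx => hasDerivAt_lhs hx) (fun x hx => hasDerivAt_rhs hx)
    (wronskian_eq_zero (fun x hx => hasDerivAt_lhs hx) (fun x hx => hasDerivAt_lhsDeriv hx)
      (fun x hx => hasDerivAt_rhs hx) (fun x hx => hasDerivAt_rhsDeriv hx)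
      (fun x hx => lhs_ode (Ioo_subset_Ico_self hx)) (fun x hx => rhs_ode hx) ?_
      (fun x hx => hasDerivAt_integratingFactor hx.1
        (pullback_denominators_pos (Ioo_subset_Ico_self hx)).1) ?_ ?_ tendsto_integratingFactor)
    (fun x hx => (rhs_pos hx).ne') (by simp [lhs, rhs, seriesEval_zero, prefactor, pullbackVar])
  all_goals
    intro x hx
    have := (pullback_denominators_pos (Ioo_subset_Ico_self hx)).1
    have := hx.1
  · positivity
  · rw [← mul_assoc, mul_div_cancel₀ _ (by positivity)]
  · positivity

end Shimura

end ShimuraPullback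

end

open ShimuraPullback

/-- The pullback identity relating `₂F₁([2/9, 5/9], [2/3], 27x)` to the
hypergeometric function `₂F₁([1/36, 19/36], [8/9], ·)` associated with a Shimura
curve: for `0 ≤ x < 1/36`, both hypergeometric series converge (absolutely) and
`₂F₁([2/9,5/9],[2/3],27x) = (1-27x)^{-1/9} (1-36x+216x²)^{-1/18}
  ₂F₁([1/36,19/36],[8/9], -1728 x³(1-27x)/(1-36x+216x²)²)`. -/
theorem shimura_pullback_identity (x : ℝ) (hx0 : 0 ≤ x) (hx : x < 1 / 36) :
    Summable (fun n : ℕ =>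
      (ascPochhammer ℝ n).eval (2 / 9) * (ascPochhammer ℝ n).eval (5 / 9) /
        ((ascPochhammer ℝ n).eval (2 / 3) * (Nat.factorial n : ℝ)) * (27 * x) ^ n) ∧
    Summable (fun n : ℕ =>
      (ascPochhammer ℝ n).eval (1 / 36) * (ascPochhammer ℝ n).eval (19 / 36) /
        ((ascPochhammer ℝ n).eval (8 / 9) * (Nat.factorial n : ℝ)) *
        (-1728 * x ^ 3 * (1 - 27 * x) / (1 - 36 * x + 216 * x ^ 2) ^ 2) ^ n) ∧
    (∑' n : ℕ,
      (ascPochhammer ℝ n).eval (2 / 9) * (ascPochhammer ℝ n).eval (5 / 9) /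
        ((ascPochhammer ℝ n).eval (2 / 3) * (Nat.factorial n : ℝ)) * (27 * x) ^ n) =
      (1 - 27 * x) ^ (-(1 / 9) : ℝ) * (1 - 36 * x + 216 * x ^ 2) ^ (-(1 / 18) : ℝ) *
      ∑' n : ℕ,
        (ascPochhammer ℝ n).eval (1 / 36) * (ascPochhammer ℝ n).eval (19 / 36) /
          ((ascPochhammer ℝ n).eval (8 / 9) * (Nat.factorial n : ℝ)) *
          (-1728 * x ^ 3 * (1 - 27 * x) / (1 - 36 * x + 216 * x ^ 2) ^ 2) ^ n := by
  have hx' : x ∈ Ico (0 : ℝ) (1 / 36) := ⟨hx0, hx⟩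
  simp only [ascPochhammer_div_eq_ordinaryHypergeometricCoefficient]
  exact ⟨(polyGrowth_F₁.hasSum (abs_27_mul_lt_one hx')).summable,
    (polyGrowth_F₂.hasSum ((abs_pullbackVar_le hx').trans_lt (by norm_num))).summable,
    lhs_eqOn_rhs hx'⟩
end
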